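/- arXiv:2502.05912 — 15 statements merged into one kernel-verified Lean document; each statement's English description precedes it below -/
import Mathlib

section
/- Let α and β be finite types, let R ⊆ α × β be a nonempty finite relation, and let (X, Y) be a pair of jointly distributed random variables with values in α × β whose joint support is contained in R. Then for every real p > 0: (1/p)·H[X] + H[Y | X] ≤ log₂( (Σ_{a ∈ α} deg_{R,α}(a)^p)^{1/p} ), where H denotes Shannon entropy and H[Y|X] conditional Shannon entropy, both with base-2 logarithms. -/
/-- Shannon entropy (base 2) of a probability mass function on a finite type,
with the convention `0 * log 0 = 0` (automatic since `0 * x = 0`). -/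
noncomputable def shannonEntropy {α : Type*} [Fintype α] (μ : α → ℝ) : ℝ :=
  - ∑ t, μ t * Real.logb 2 (μ t)

/-!
Both bounds are instances of Gibbs' inequality `H(w) + Σ wᵢ log cᵢ ≤ log Σ cᵢ` for a
probability vector `w` and weights `c ≥ 0` positive on its support, which is Jensen's
inequality for `log` applied to `cᵢ / wᵢ`. Taking `c(a, b) = P(X = a) / deg(a)` on `R`
(so that `Σ c ≤ 1`) gives `H[Y|X] ≤ E[log deg(X)]`; taking `c(a) = deg(a)^p` gives
`H[X] + p · E[log deg(X)] ≤ log Σ deg^p`. Dividing the second by `p` and adding the first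
proves the claim.
-/

open Finset Real

section Gibbs

variable {ι : Type*}

theorem Finset.sum_mul_logb_le_logb_sum_mul {s : Finset ι} {w f : ι → ℝ}
    (hw0 : ∀ i ∈ s, 0 ≤ w i) (hw1 : ∑ i ∈ s, w i = 1) (hf : ∀ i ∈ s, 0 < f i) :
    ∑ i ∈ s, w i * logb 2 (f i) ≤ logb 2 (∑ i ∈ s, w i * f i) := by
  simp only [logb, mul_div_assoc', ← sum_div]
  gcongr
  simpa only [smul_eq_mul] using strictConcaveOn_log_Ioi.concaveOn.le_map_sum hw0 hw1 hf

variable [Fintype ι]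

theorem shannonEntropy_add_sum_mul_logb_le {w c : ι → ℝ} (hw0 : ∀ i, 0 ≤ w i)
    (hw1 : ∑ i, w i = 1) (hc0 : ∀ i, 0 ≤ c i) (hc : ∀ i, w i ≠ 0 → 0 < c i) :
    shannonEntropy w + ∑ i, w i * logb 2 (c i) ≤ logb 2 (∑ i, c i) := by
  classical
  set S := univ.filter (w · ≠ 0)
  have hS_sum (g : ι → ℝ) : ∑ i ∈ S, w i * g i = ∑ i, w i * g i :=
    sum_filter_of_ne fun _ _ h => left_ne_zero_of_mul h
  have hS : ∀ i ∈ S, w i ≠ 0 := fun i hi => (mem_filter.1 hi).2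
  obtain ⟨i₀, -, hi₀⟩ := exists_ne_zero_of_sum_ne_zero (hw1.trans_ne one_ne_zero)
  calc shannonEntropy w + ∑ i, w i * logb 2 (c i)
      = ∑ i ∈ S, w i * (logb 2 (c i) - logb 2 (w i)) := by
        rw [hS_sum, shannonEntropy]
        simp only [mul_sub, sum_sub_distrib]
        ring
    _ = ∑ i ∈ S, w i * logb 2 (c i / w i) :=
        sum_congr rfl fun i hi => by rw [logb_div (hc i (hS i hi)).ne' (hS i hi)]
    _ ≤ logb 2 (∑ i ∈ S, w i * (c i / w i)) :=
        sum_mul_logb_le_logb_sum_mul (fun i _ => hw0 i) ((sum_filter_ne_zero _).trans hw1)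
          fun i hi => div_pos (hc i (hS i hi)) ((hw0 i).lt_of_ne' (hS i hi))
    _ = logb 2 (∑ i ∈ S, c i) := by
        rw [sum_congr rfl fun i hi => mul_div_cancel₀ (c i) (hS i hi)]
    _ ≤ logb 2 (∑ i, c i) :=
        logb_le_logb_of_le one_lt_two
          (sum_pos (fun i hi => hc i (hS i hi)) ⟨i₀, mem_filter.2 ⟨mem_univ _, hi₀⟩⟩)
          (sum_le_sum_of_subset_of_nonneg (subset_univ S) fun i _ _ => hc0 i)

theorem shannonEntropy_add_mul_sum_mul_logb_le {w d : ι → ℝ}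
    (hw0 : ∀ i, 0 ≤ w i) (hw1 : ∑ i, w i = 1) (hd0 : ∀ i, 0 ≤ d i)
    (hd : ∀ i, w i ≠ 0 → 0 < d i) (p : ℝ) :
    shannonEntropy w + p * ∑ i, w i * logb 2 (d i) ≤ logb 2 (∑ i, d i ^ p) := by
  have hlog : p * ∑ i, w i * logb 2 (d i) = ∑ i, w i * logb 2 (d i ^ p) := by
    rw [mul_sum]
    refine sum_congr rfl fun i _ => ?_
    rcases eq_or_ne (w i) 0 with h | h
    · simp [h]
    · rw [logb_rpow_eq_mul_logb_of_pos (hd i h)]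
      ring
  rw [hlog]
  exact shannonEntropy_add_sum_mul_logb_le hw0 hw1 (fun i => rpow_nonneg (hd0 i) p)
    fun i h => rpow_pos_of_pos (hd i h) p

end Gibbs

section Relation

variable {α β : Type*} {R : Finset (α × β)} {μ : α × β → ℝ}

def relDegree [DecidableEq α] (R : Finset (α × β)) (a : α) : ℕ := #{t ∈ R | t.1 = a}

def fstMarginal [Fintype β] (μ : α × β → ℝ) (a : α) : ℝ := ∑ b, μ (a, b)

theorem relDegree_pos_of_mem [DecidableEq α] {t : α × β} (ht : t ∈ R) :
    0 < relDegree R t.1 :=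
  card_pos.2 ⟨t, mem_filter.2 ⟨ht, rfl⟩⟩

theorem sum_div_relDegree_le [Fintype α] [DecidableEq α] {f : α → ℝ}
    (hf : ∀ a, 0 ≤ f a) : ∑ t ∈ R, f t.1 / relDegree R t.1 ≤ ∑ a, f a := by
  rw [← sum_fiberwise R Prod.fst]
  gcongr with a
  rw [sum_congr rfl fun t ht => by rw [(mem_filter.1 ht).2], sum_const, nsmul_eq_mul]
  change (relDegree R a : ℝ) * (f a / relDegree R a) ≤ f a
  rcases eq_or_ne (relDegree R a : ℝ) 0 with h | h
  · simp [h, hf a]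
  · rw [mul_div_cancel₀ _ h]

variable [Fintype β]

theorem sum_fstMarginal [Fintype α] : ∑ a, fstMarginal μ a = ∑ t, μ t :=
  (Fintype.sum_prod_type μ).symm

theorem sum_mul_comp_fst [Fintype α] (f : α → ℝ) :
    ∑ t, μ t * f t.1 = ∑ a, fstMarginal μ a * f a := by
  simp only [Fintype.sum_prod_type, fstMarginal, sum_mul]

theorem fstMarginal_nonneg (hμ0 : ∀ t, 0 ≤ μ t) (a : α) : 0 ≤ fstMarginal μ a :=
  sum_nonneg fun b _ => hμ0 (a, b)

theorem fstMarginal_pos (hμ0 : ∀ t, 0 ≤ μ t) {t : α × β} (ht : μ t ≠ 0) :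
    0 < fstMarginal μ t.1 :=
  ((hμ0 t).lt_of_ne' ht).trans_le <|
    single_le_sum (f := fun b => μ (t.1, b)) (fun b _ => hμ0 (t.1, b)) (mem_univ t.2)

theorem relDegree_pos_of_fstMarginal_ne_zero [DecidableEq α]
    (hsupp : ∀ t, μ t ≠ 0 → t ∈ R) {a : α} (ha : fstMarginal μ a ≠ 0) :
    0 < relDegree R a := by
  obtain ⟨b, -, hb⟩ := exists_ne_zero_of_sum_ne_zero ha
  exact relDegree_pos_of_mem (hsupp (a, b) hb)

variable [Fintype α] [DecidableEq α]

theorem shannonEntropy_sub_shannonEntropy_fstMarginal_le (hμ0 : ∀ t, 0 ≤ μ t)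
    (hμ1 : ∑ t, μ t = 1) (hsupp : ∀ t, μ t ≠ 0 → t ∈ R) :
    shannonEntropy μ - shannonEntropy (fstMarginal μ)
      ≤ ∑ a, fstMarginal μ a * logb 2 (relDegree R a) := by
  classical
  set c : α × β → ℝ := fun t => if t ∈ R then fstMarginal μ t.1 / relDegree R t.1 else 0
  have hc_of_mem {t} (ht : t ∈ R) : c t = fstMarginal μ t.1 / relDegree R t.1 := if_pos ht
  have hc0 (t) : 0 ≤ c t := by
    by_cases ht : t ∈ R
    · rw [hc_of_mem ht]
      exact div_nonneg (fstMarginal_nonneg hμ0 _) (Nat.cast_nonneg _)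
    · exact (if_neg ht).ge
  have hc (t) (ht : μ t ≠ 0) : 0 < c t := by
    rw [hc_of_mem (hsupp t ht)]
    exact div_pos (fstMarginal_pos hμ0 ht)
      (Nat.cast_pos.2 (relDegree_pos_of_mem (hsupp t ht)))
  have hc_sum : ∑ t, c t ≤ 1 := by
    rw [Fintype.sum_ite_mem, ← hμ1, ← sum_fstMarginal]
    exact sum_div_relDegree_le (fstMarginal_nonneg hμ0)
  have hc_log : ∑ t, μ t * logb 2 (c t) = -shannonEntropy (fstMarginal μ)
      - ∑ a, fstMarginal μ a * logb 2 (relDegree R a) := by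
    calc ∑ t, μ t * logb 2 (c t)
        = ∑ t, (μ t * logb 2 (fstMarginal μ t.1) - μ t * logb 2 (relDegree R t.1)) :=
          sum_congr rfl fun t _ => by
            rcases eq_or_ne (μ t) 0 with h | h
            · simp [h]
            · rw [hc_of_mem (hsupp t h), logb_div (fstMarginal_pos hμ0 h).ne'
                (Nat.cast_pos.2 (relDegree_pos_of_mem (hsupp t h))).ne', mul_sub]
      _ = _ := by
          rw [shannonEntropy, neg_neg, sum_sub_distrib,
            sum_mul_comp_fst fun a => logb 2 (fstMarginal μ a),
            sum_mul_comp_fst fun a => logb 2 (relDegree R a : ℝ)]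
  linarith [shannonEntropy_add_sum_mul_logb_le hμ0 hμ1 hc0 hc,
    logb_nonpos one_lt_two (sum_nonneg fun t _ => hc0 t) hc_sum]

end Relation

theorem lp_norm_entropy_inequality_general {α β : Type*} [Fintype α] [Fintype β]
    [DecidableEq α]
    (R : Finset (α × β))
    (μ : α × β → ℝ) (hμ0 : ∀ t, 0 ≤ μ t) (hμ1 : ∑ t, μ t = 1)
    (hsupp : ∀ t, μ t ≠ 0 → t ∈ R)
    (p : ℝ) (hp : 0 < p) :
    (1 / p) * shannonEntropy (fun a => ∑ b, μ (a, b))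
      + (shannonEntropy μ - shannonEntropy (fun a => ∑ b, μ (a, b)))
    ≤ Real.logb 2
        ((∑ a, ((R.filter (fun t => t.1 = a)).card : ℝ) ^ p) ^ (1 / p)) := by
  set HX := shannonEntropy (fstMarginal μ)
  set D := ∑ a, fstMarginal μ a * logb 2 (relDegree R a)
  set N := ∑ a, (relDegree R a : ℝ) ^ p
  change (1 / p) * HX + (shannonEntropy μ - HX) ≤ logb 2 (N ^ (1 / p))
  have hX1 : ∑ a, fstMarginal μ a = 1 := sum_fstMarginal.trans hμ1
  have hdeg (a) (ha : fstMarginal μ a ≠ 0) : 0 < (relDegree R a : ℝ) :=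
    Nat.cast_pos.2 (relDegree_pos_of_fstMarginal_ne_zero hsupp ha)
  have hN : 0 < N := by
    obtain ⟨a, -, ha⟩ := exists_ne_zero_of_sum_ne_zero (hX1.trans_ne one_ne_zero)
    exact sum_pos' (fun a _ => by positivity)
      ⟨a, mem_univ a, rpow_pos_of_pos (hdeg a ha) p⟩
  calc (1 / p) * HX + (shannonEntropy μ - HX)
      ≤ (1 / p) * HX + D := by
        gcongr
        exact shannonEntropy_sub_shannonEntropy_fstMarginal_le hμ0 hμ1 hsupp
    _ = (1 / p) * (HX + p * D) := by field_simp
    _ ≤ (1 / p) * logb 2 N := by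
        gcongr
        exact shannonEntropy_add_mul_sum_mul_logb_le (fstMarginal_nonneg hμ0) hX1
          (fun _ => Nat.cast_nonneg _) hdeg p
    _ = logb 2 (N ^ (1 / p)) := (logb_rpow_eq_mul_logb_of_pos hN).symm

/-- For jointly distributed random variables `(X, Y)` (described by their joint
distribution `μ` on `α × β`) whose support is contained in a nonempty finite relation
`R ⊆ α × β`, and every real `p > 0`:
`(1/p)·H[X] + H[Y|X] ≤ log₂ ‖deg_R(B|A)‖_p`,
where `H[Y|X] = H[X,Y] - H[X]` and
`‖deg_R(B|A)‖_p = (Σ_{a ∈ α} deg_{R,α}(a)^p)^{1/p}`. -/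
theorem lp_norm_entropy_inequality {α β : Type*} [Fintype α] [Fintype β]
    [DecidableEq α] [DecidableEq β]
    (R : Finset (α × β)) (hR : R.Nonempty)
    (μ : α × β → ℝ) (hμ0 : ∀ t, 0 ≤ μ t) (hμ1 : ∑ t, μ t = 1)
    (hsupp : ∀ t, μ t ≠ 0 → t ∈ R)
    (p : ℝ) (hp : 0 < p) :
    (1 / p) * shannonEntropy (fun a => ∑ b, μ (a, b))
      + (shannonEntropy μ - shannonEntropy (fun a => ∑ b, μ (a, b)))
    ≤ Real.logb 2
        ((∑ a, ((R.filter (fun t => t.1 = a)).card : ℝ) ^ p) ^ (1 / p)) :=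
  lp_norm_entropy_inequality_general R μ hμ0 hμ1 hsupp p hp
end

section
/- Let R ⊆ α × β, S ⊆ β × γ, T ⊆ γ × δ be finite relations and let J3 = {(x,y,z,u) : (x,y) ∈ R, (y,z) ∈ S, (z,u) ∈ T}. Then |J3| ≤ |R|^{1/3} · (Σ_{y ∈ β} |{x : (x,y) ∈ R}|²)^{1/3} · (Σ_{y ∈ β} |{z : (y,z) ∈ S}|²)^{1/3} · (Σ_{z ∈ γ} |{u : (z,u) ∈ T}|³)^{1/3}. (The q-inequality |J3| ≤ |R|^{1/3} · ‖deg_R(X|Y)‖_2^{2/3} · ‖deg_S(Z|Y)‖_2^{2/3} · ‖deg_T(U|Z)‖_3.) -/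
/-!
Grouping the join by the middle edge `(y, z) ∈ S`, its size is `∑_y r(y) · ∑_{z ∈ N(y)} t(z)`,
where `r(y)` counts the `R`-edges into `y`, `t(z)` the `T`-edges out of `z`, and `N(y)` the
`S`-neighbourhood of `y`. Hölder's inequality bounds each inner sum by `|N(y)|^{2/3} ‖t‖_3`;
then weighted Hölder with exponent `3/2` gives
`∑ r |N|^{2/3} ≤ (∑ r)^{1/3} (∑ r |N|)^{2/3}`, and Cauchy–Schwarz finishes.
-/

open Finset

section Fibers

variable {α β : Type*} [DecidableEq α] [DecidableEq β]

lemma card_filter_snd_eq [Fintype α] (R : Finset (α × β)) (b : β) :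
    #(R.filter (·.2 = b)) = #(univ.filter fun a ↦ (a, b) ∈ R) := by
  refine card_nbij' Prod.fst (fun a ↦ (a, b)) ?_ ?_ ?_ ?_ <;> intro p <;> aesop

lemma card_filter_fst_eq [Fintype β] (R : Finset (α × β)) (a : α) :
    #(R.filter (·.1 = a)) = #(univ.filter fun b ↦ (a, b) ∈ R) := by
  refine card_nbij' Prod.snd (fun b ↦ (a, b)) ?_ ?_ ?_ ?_ <;> intro p <;> aesop

end Fibers

lemma card_join_eq {α β γ δ : Type*} [Fintype α] [Fintype β] [Fintype γ] [Fintype δ]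
    [DecidableEq α] [DecidableEq β] [DecidableEq γ] [DecidableEq δ]
    (R : Finset (α × β)) (S : Finset (β × γ)) (T : Finset (γ × δ)) :
    #(univ.filter fun t : α × β × γ × δ ↦
        (t.1, t.2.1) ∈ R ∧ (t.2.1, t.2.2.1) ∈ S ∧ (t.2.2.1, t.2.2.2) ∈ T)
      = ∑ y, #(univ.filter fun x ↦ (x, y) ∈ R) *
          ∑ z ∈ univ.filter (fun z ↦ (y, z) ∈ S), #(univ.filter fun u ↦ (z, u) ∈ T) := by
  simp only [card_filter, Fintype.sum_prod_type, sum_filter, mul_sum, sum_mul]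
  rw [sum_comm]
  refine sum_congr rfl fun y _ ↦ ?_
  rw [sum_comm]
  refine sum_congr rfl fun z _ ↦ ?_
  by_cases hS : (y, z) ∈ S <;> simp [hS, ite_and]


lemma sum_le_card_rpow_mul_sum_pow_three {ι : Type*} (s : Finset ι) {f : ι → ℝ}
    (hf : ∀ i, 0 ≤ f i) :
    ∑ i ∈ s, f i ≤ (#s : ℝ) ^ ((2 : ℝ) / 3) * (∑ i ∈ s, f i ^ 3) ^ ((1 : ℝ) / 3) := by
  have := Real.inner_le_weight_mul_Lp_of_nonneg s (p := 3) (by norm_num) (fun _ ↦ 1) f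
    (fun _ ↦ zero_le_one) hf
  convert this using 2 <;> norm_num

lemma sum_mul_rpow_two_thirds_le {ι : Type*} (s : Finset ι) {r d : ι → ℝ}
    (hr : ∀ i, 0 ≤ r i) (hd : ∀ i, 0 ≤ d i) :
    ∑ i ∈ s, r i * d i ^ ((2 : ℝ) / 3) ≤
      (∑ i ∈ s, r i) ^ ((1 : ℝ) / 3) * (∑ i ∈ s, r i ^ 2) ^ ((1 : ℝ) / 3) *
        (∑ i ∈ s, d i ^ 2) ^ ((1 : ℝ) / 3) := by
  have holder : ∑ i ∈ s, r i * d i ^ ((2 : ℝ) / 3) ≤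
      (∑ i ∈ s, r i) ^ ((1 : ℝ) / 3) * (∑ i ∈ s, r i * d i) ^ ((2 : ℝ) / 3) := by
    have := Real.inner_le_weight_mul_Lp_of_nonneg s (p := 3 / 2) (by norm_num) r
      (fun i ↦ d i ^ ((2 : ℝ) / 3)) hr (fun i ↦ Real.rpow_nonneg (hd i) _)
    convert this using 3
    · norm_num
    · refine sum_congr rfl fun i _ ↦ ?_
      rw [← Real.rpow_mul (hd i)]
      norm_num
    · norm_num
  have cauchy_schwarz : (∑ i ∈ s, r i * d i) ^ ((2 : ℝ) / 3) ≤
      (∑ i ∈ s, r i ^ 2) ^ ((1 : ℝ) / 3) * (∑ i ∈ s, d i ^ 2) ^ ((1 : ℝ) / 3) := by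
    have hrd : 0 ≤ ∑ i ∈ s, r i * d i := sum_nonneg fun i _ ↦ mul_nonneg (hr i) (hd i)
    rw [← Real.mul_rpow (by positivity) (by positivity),
      show (2 : ℝ) / 3 = 2 * (1 / 3) by norm_num, Real.rpow_mul hrd, Real.rpow_two]
    gcongr
    exact sum_mul_sq_le_sq_mul_sq s r d
  calc _ ≤ _ := holder
    _ ≤ (∑ i ∈ s, r i) ^ ((1 : ℝ) / 3) *
          ((∑ i ∈ s, r i ^ 2) ^ ((1 : ℝ) / 3) * (∑ i ∈ s, d i ^ 2) ^ ((1 : ℝ) / 3)) :=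
      mul_le_mul_of_nonneg_left cauchy_schwarz (Real.rpow_nonneg (sum_nonneg fun i _ ↦ hr i) _)
    _ = _ := by ring

lemma sum_mul_sum_neighbors_le {β γ : Type*} [Fintype β] [Fintype γ]
    [DecidableEq β] [DecidableEq γ]
    (S : Finset (β × γ)) {r : β → ℝ} {t : γ → ℝ} (hr : ∀ y, 0 ≤ r y) (ht : ∀ z, 0 ≤ t z) :
    ∑ y, r y * ∑ z ∈ univ.filter (fun z ↦ (y, z) ∈ S), t z ≤
      (∑ y, r y) ^ ((1 : ℝ) / 3) * (∑ y, r y ^ 2) ^ ((1 : ℝ) / 3) *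
        (∑ y, (#(univ.filter fun z ↦ (y, z) ∈ S) : ℝ) ^ 2) ^ ((1 : ℝ) / 3) *
        (∑ z, t z ^ 3) ^ ((1 : ℝ) / 3) := by
  set N : β → Finset γ := fun y ↦ univ.filter fun z ↦ (y, z) ∈ S
  have cubes_nonneg (z : γ) : 0 ≤ t z ^ 3 := pow_nonneg (ht z) 3
  have neighbors_le (y : β) : ∑ z ∈ N y, t z ≤
      (#(N y) : ℝ) ^ ((2 : ℝ) / 3) * (∑ z, t z ^ 3) ^ ((1 : ℝ) / 3) := by
    refine (sum_le_card_rpow_mul_sum_pow_three (N y) ht).trans ?_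
    gcongr _ * ?_
    exact Real.rpow_le_rpow (sum_nonneg fun z _ ↦ cubes_nonneg z)
      (sum_le_univ_sum_of_nonneg cubes_nonneg) (by norm_num)
  calc ∑ y, r y * ∑ z ∈ N y, t z
      ≤ ∑ y, r y * ((#(N y) : ℝ) ^ ((2 : ℝ) / 3) * (∑ z, t z ^ 3) ^ ((1 : ℝ) / 3)) := by
        gcongr with y
        · exact hr y
        · exact neighbors_le y
    _ = (∑ y, r y * (#(N y) : ℝ) ^ ((2 : ℝ) / 3)) * (∑ z, t z ^ 3) ^ ((1 : ℝ) / 3) := by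
        simp only [sum_mul, mul_assoc]
    _ ≤ _ := by
        gcongr
        · exact Real.rpow_nonneg (sum_nonneg fun z _ ↦ cubes_nonneg z) _
        · exact sum_mul_rpow_two_thirds_le univ hr fun y ↦ Nat.cast_nonneg _

/-- The q-inequality
`|J3| ≤ |R|^{1/3} · ‖deg_R(X|Y)‖_2^{2/3} · ‖deg_S(Z|Y)‖_2^{2/3} · ‖deg_T(U|Z)‖_3`
for the three-way join, written with `‖·‖_2^{2/3} = (Σ d²)^{1/3}` and
`‖·‖_3 = (Σ d³)^{1/3}`. -/
theorem three_way_join_mixed_norm_bound {α β γ δ : Type*}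
    [Fintype α] [Fintype β] [Fintype γ] [Fintype δ]
    [DecidableEq α] [DecidableEq β] [DecidableEq γ] [DecidableEq δ]
    (R : Finset (α × β)) (S : Finset (β × γ)) (T : Finset (γ × δ)) :
    ((Finset.univ.filter
        (fun t : α × β × γ × δ =>
          (t.1, t.2.1) ∈ R ∧ (t.2.1, t.2.2.1) ∈ S ∧ (t.2.2.1, t.2.2.2) ∈ T)).card : ℝ)
    ≤ (R.card : ℝ) ^ ((1 : ℝ) / 3)
      * (∑ y, ((R.filter (fun t => t.2 = y)).card : ℝ) ^ 2) ^ ((1 : ℝ) / 3)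
      * (∑ y, ((S.filter (fun t => t.1 = y)).card : ℝ) ^ 2) ^ ((1 : ℝ) / 3)
      * (∑ z, ((T.filter (fun t => t.1 = z)).card : ℝ) ^ 3) ^ ((1 : ℝ) / 3) := by
  have card_R : #R = ∑ y, #(R.filter (·.2 = y)) :=
    card_eq_sum_card_fiberwise fun _ _ ↦ mem_univ _
  rw [card_join_eq, card_R]
  simp only [card_filter_snd_eq, card_filter_fst_eq]
  push_cast
  exact sum_mul_sum_neighbors_le S (fun _ ↦ Nat.cast_nonneg _) (fun _ ↦ Nat.cast_nonneg _)
end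

section
/- Let R ⊆ α × β, S ⊆ β × γ, T ⊆ γ × α be finite relations and let C3 = {(x,y,z) : (x,y) ∈ R, (y,z) ∈ S, (z,x) ∈ T} be the triangle (3-clique) join. Then |C3| ≤ (|R| · |S| · |T|)^{1/2}. (The AGM bound for the triangle query, corresponding to the fractional edge cover with all weights 1/2.) -/
/-!
Split the triangles `(x, y, z)` according to their third vertex `z`. A fibre injects into `R`
through `(x, y)`, and into the product of the `S`-edges ending at `z` and the `T`-edges starting
at `z`; so its size is at most `√|R| · √(deg_S z) · √(deg_T z)`. Summing over `z` and applying
Cauchy–Schwarz to `∑ √(deg_S z) √(deg_T z)` gives `√|R| · √|S| · √|T|`.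
-/

open Finset

namespace Real

lemma le_sqrt_mul_sqrt_of_le_of_le {f A c : ℝ} (hf : 0 ≤ f) (hA : f ≤ A) (hc : f ≤ c) :
    f ≤ √A * √c := by
  rw [← sqrt_mul (hf.trans hA), ← sqrt_mul_self hf]
  exact sqrt_le_sqrt (mul_le_mul hA hc hf (hf.trans hA))

lemma sum_le_sqrt_mul_sum_mul_sum {ι : Type*} (u : Finset ι) {f a b : ι → ℝ} {A : ℝ}
    (hf : ∀ i ∈ u, 0 ≤ f i) (ha : ∀ i, 0 ≤ a i) (hb : ∀ i, 0 ≤ b i)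
    (hfA : ∀ i ∈ u, f i ≤ A) (hfab : ∀ i ∈ u, f i ≤ a i * b i) :
    ∑ i ∈ u, f i ≤ √(A * (∑ i ∈ u, a i) * ∑ i ∈ u, b i) := by
  have hfiber : ∀ i ∈ u, f i ≤ √A * (√(a i) * √(b i)) := fun i hi => by
    rw [← sqrt_mul (ha i)]
    exact le_sqrt_mul_sqrt_of_le_of_le (hf i hi) (hfA i hi) (hfab i hi)
  calc ∑ i ∈ u, f i ≤ ∑ i ∈ u, √A * (√(a i) * √(b i)) := sum_le_sum hfiber
    _ = √A * ∑ i ∈ u, √(a i) * √(b i) := (mul_sum ..).symm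
    _ ≤ √A * (√(∑ i ∈ u, a i) * √(∑ i ∈ u, b i)) := by
      gcongr
      exact sum_sqrt_mul_sqrt_le u ha hb
    _ = √(A * (∑ i ∈ u, a i) * ∑ i ∈ u, b i) := by
      rw [sqrt_mul' _ (sum_nonneg fun i _ => hb i), sqrt_mul' _ (sum_nonneg fun i _ => ha i),
        mul_assoc]

end Real

section TriangleJoin

variable {α β γ : Type*} [Fintype α] [Fintype β] [Fintype γ]
  [DecidableEq α] [DecidableEq β] [DecidableEq γ]

def triangleJoin (R : Finset (α × β)) (S : Finset (β × γ)) (T : Finset (γ × α)) :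
    Finset (α × β × γ) :=
  univ.filter fun t => (t.1, t.2.1) ∈ R ∧ (t.2.1, t.2.2) ∈ S ∧ (t.2.2, t.1) ∈ T

variable (R : Finset (α × β)) (S : Finset (β × γ)) (T : Finset (γ × α)) (z : γ)

lemma card_triangleJoin_eq_sum_card_fiber :
    #(triangleJoin R S T) = ∑ z, #{t ∈ triangleJoin R S T | t.2.2 = z} :=
  card_eq_sum_card_fiberwise fun _ _ => mem_univ _

lemma card_triangleJoin_fiber_le_card_left :
    #{t ∈ triangleJoin R S T | t.2.2 = z} ≤ #R := by
  refine card_le_card_of_injOn (fun t => (t.1, t.2.1)) (fun t ht => ?_) ?_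
  · simp only [triangleJoin, mem_coe, mem_filter, mem_univ, true_and] at ht
    exact ht.1.1
  · rintro ⟨x, y, z₁⟩ h₁ ⟨x', y', z₂⟩ h₂ h
    simp only [mem_coe, mem_filter] at h₁ h₂
    simp_all

lemma card_triangleJoin_fiber_le_mul :
    #{t ∈ triangleJoin R S T | t.2.2 = z} ≤ #{e ∈ S | e.2 = z} * #{e ∈ T | e.1 = z} := by
  rw [← card_product]
  refine card_le_card_of_injOn (fun t => ((t.2.1, t.2.2), (t.2.2, t.1))) (fun ⟨x, y, w⟩ ht => ?_) ?_
  · simp only [triangleJoin, mem_coe, mem_filter, mem_univ, true_and] at ht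
    obtain ⟨⟨-, hS, hT⟩, rfl⟩ := ht
    simp [hS, hT]
  · rintro ⟨x, y, z₁⟩ _ ⟨x', y', z₂⟩ _ h
    simp_all

end TriangleJoin

/-- The AGM bound for the triangle query: `|C3| ≤ (|R| · |S| · |T|)^{1/2}`. -/
theorem triangle_agm_bound {α β γ : Type*} [Fintype α] [Fintype β] [Fintype γ]
    [DecidableEq α] [DecidableEq β] [DecidableEq γ]
    (R : Finset (α × β)) (S : Finset (β × γ)) (T : Finset (γ × α)) :
    ((Finset.univ.filter
        (fun t : α × β × γ =>
          (t.1, t.2.1) ∈ R ∧ (t.2.1, t.2.2) ∈ S ∧ (t.2.2, t.1) ∈ T)).card : ℝ)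
    ≤ ((R.card : ℝ) * (S.card : ℝ) * (T.card : ℝ)) ^ ((1 : ℝ) / 2) := by
  change (#(triangleJoin R S T) : ℝ) ≤ _
  have hS : ∑ z, (#{e ∈ S | e.2 = z} : ℝ) = #S := by
    exact_mod_cast (card_eq_sum_card_fiberwise fun _ _ => mem_univ _).symm
  have hT : ∑ z, (#{e ∈ T | e.1 = z} : ℝ) = #T := by
    exact_mod_cast (card_eq_sum_card_fiberwise fun _ _ => mem_univ _).symm
  rw [← Real.sqrt_eq_rpow, ← hS, ← hT, card_triangleJoin_eq_sum_card_fiber, Nat.cast_sum]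
  refine Real.sum_le_sqrt_mul_sum_mul_sum univ (fun _ _ => Nat.cast_nonneg _)
    (fun _ => Nat.cast_nonneg _) (fun _ => Nat.cast_nonneg _) (fun z _ => ?_) (fun z _ => ?_)
  · exact_mod_cast card_triangleJoin_fiber_le_card_left R S T z
  · exact_mod_cast card_triangleJoin_fiber_le_mul R S T z
end

section
/- Let R ⊆ α × β, S ⊆ β × γ, T ⊆ γ × α be finite relations and let C3 = {(x,y,z) : (x,y) ∈ R, (y,z) ∈ S, (z,x) ∈ T} be the triangle join. Then |C3| ≤ ( (Σ_{x ∈ α} |{y : (x,y) ∈ R}|²) · (Σ_{y ∈ β} |{z : (y,z) ∈ S}|²) · (Σ_{z ∈ γ} |{x : (z,x) ∈ T}|²) )^{1/3}. (The q-inequality |C3| ≤ (‖deg_R(Y|X)‖_2² · ‖deg_S(Z|Y)‖_2² · ‖deg_T(X|Z)‖_2²)^{1/3}.) -/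
/-!
Let `(X, Y, Z)` be a uniformly random triangle, so that `H(X, Y, Z) = log |C3|`. At the vertex
`X`, `H(X, Y, Z) ≤ H(X) + H(Y | X) + H(Z | X) = H(X, Y) + H(Z, X) - H(X)`, and together with
`H(Y | X) ≤ E log deg_R(X)` and Gibbs' inequality `H(X) + 2 E log deg_R(X) ≤ log ∑ₓ deg_R(x)²`
this gives `H(X, Y, Z) + H(X, Y) - H(Z, X) ≤ log ∑ₓ deg_R(x)²`. Adding the three cyclic rotations
of this bound, the pairwise entropies cancel and `3 log |C3|` is at most the logarithm of the
product of the three sums of squared degrees. In counting form, each of these entropy inequalities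
follows from `log x ≤ x - 1`.
-/

open Finset Real

lemma sum_log_le_card_mul_log_mean {ι : Type*} (s : Finset ι) (g : ι → ℝ)
    (hg : ∀ t ∈ s, 0 < g t) :
    ∑ t ∈ s, log (g t) ≤ #s * log ((∑ t ∈ s, g t) / #s) := by
  rcases s.eq_empty_or_nonempty with rfl | hs
  · simp
  have hN : (0 : ℝ) < #s := by exact_mod_cast hs.card_pos
  set M := (∑ t ∈ s, g t) / #s
  have hM : 0 < M := div_pos (sum_pos hg hs) hN
  have hlog : ∀ t ∈ s, log (g t) - log M ≤ g t / M - 1 := fun t ht => by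
    rw [← log_div (hg t ht).ne' hM.ne']
    exact log_le_sub_one_of_pos (div_pos (hg t ht) hM)
  have hsum : ∑ t ∈ s, g t / M = #s := by
    rw [← sum_div, div_div_cancel₀ (sum_pos hg hs).ne']
  have := sum_le_sum hlog
  simp only [sum_sub_distrib, sum_const, nsmul_eq_mul, mul_one, hsum] at this
  linarith

section Fibers

variable {ι κ κ' κ'' : Type*} [DecidableEq κ] [DecidableEq κ'] [DecidableEq κ'']

/-- With `t` drawn uniformly from `s`, `fiberCard s f t / #s` is the probability of the value `f t`,
so `∑ t ∈ s, log (fiberCard s f t) = #s * (log #s - H(f))`. -/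
def fiberCard (s : Finset ι) (f : ι → κ) (t : ι) : ℕ := #{u ∈ s | f u = f t}

lemma fiberCard_pos {s : Finset ι} {t : ι} (f : ι → κ) (ht : t ∈ s) : 0 < fiberCard s f t :=
  card_pos.2 ⟨t, mem_filter.2 ⟨ht, rfl⟩⟩

lemma fiberCard_swap (s : Finset ι) (f : ι → κ) (g : ι → κ') :
    fiberCard s (fun t => (g t, f t)) = fiberCard s (fun t => (f t, g t)) := by
  funext t
  simp only [fiberCard, Prod.ext_iff, and_comm]

lemma fiberCard_of_mem_filter {s : Finset ι} {f : ι → κ} {x : κ} {t : ι}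
    (ht : t ∈ s.filter (f · = x)) :
    fiberCard s f t = #(s.filter (f · = x)) := by
  rw [fiberCard, (mem_filter.1 ht).2]

lemma fiberCard_filter {s : Finset ι} {f : ι → κ} {x : κ} {t : ι} (g : ι → κ')
    (ht : t ∈ s.filter (f · = x)) :
    fiberCard (s.filter (f · = x)) g t = fiberCard s (fun u => (f u, g u)) t := by
  simp only [fiberCard, filter_filter, Prod.ext_iff, (mem_filter.1 ht).2]

lemma sum_div_fiberCard (s : Finset ι) (f : ι → κ) (φ : κ → ℝ) :
    ∑ t ∈ s, φ (f t) / fiberCard s f t = ∑ x ∈ s.image f, φ x := by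
  rw [← sum_fiberwise_of_maps_to (fun t ht => mem_image_of_mem f ht)]
  refine sum_congr rfl fun x hx => ?_
  obtain ⟨t, ht, rfl⟩ := mem_image.1 hx
  have hF : 0 < #(s.filter (f · = f t)) := card_pos.2 ⟨t, mem_filter.2 ⟨ht, rfl⟩⟩
  rw [sum_congr rfl fun u hu => by rw [fiberCard_of_mem_filter hu, (mem_filter.1 hu).2],
    sum_const, nsmul_eq_mul, mul_div_cancel₀ _ (by positivity)]

/-- Gibbs' inequality `H(f) + E log φ(f) ≤ log ∑ φ`. -/
lemma card_mul_log_card_add_sum_log_sub_log_fiberCard_le (s : Finset ι) (f : ι → κ)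
    (φ : κ → ℝ) (hφ : ∀ t ∈ s, 0 < φ (f t)) :
    #s * log #s + ∑ t ∈ s, (log (φ (f t)) - log (fiberCard s f t))
      ≤ #s * log (∑ x ∈ s.image f, φ x) := by
  rcases s.eq_empty_or_nonempty with rfl | hs
  · simp
  have hN : (0 : ℝ) < #s := by exact_mod_cast hs.card_pos
  have hn : ∀ t ∈ s, (0 : ℝ) < fiberCard s f t := fun t ht => by
    exact_mod_cast fiberCard_pos f ht
  have hJensen := sum_log_le_card_mul_log_mean s (fun t => φ (f t) * #s / fiberCard s f t)
    fun t ht => div_pos (mul_pos (hφ t ht) hN) (hn t ht)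
  simp_rw [mul_div_right_comm _ (#s : ℝ), ← sum_mul, sum_div_fiberCard,
    mul_div_cancel_right₀ _ hN.ne'] at hJensen
  rw [sum_congr rfl fun t ht => by
    rw [log_mul (div_pos (hφ t ht) (hn t ht)).ne' hN.ne', log_div (hφ t ht).ne' (hn t ht).ne']]
    at hJensen
  simp only [sum_add_distrib, sum_const, nsmul_eq_mul] at hJensen
  linarith

lemma sum_fiberCard_mul_fiberCard_le (s : Finset ι) (g : ι → κ) (h : ι → κ')
    (hinj : Set.InjOn (fun t => (g t, h t)) s) :
    ∑ t ∈ s, fiberCard s g t * fiberCard s h t ≤ #s ^ 2 := by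
  let r : ι → ι × ι → Prop := fun t p => g p.1 = g t ∧ h p.2 = h t
  have hpair : ∀ t, fiberCard s g t * fiberCard s h t = #((s ×ˢ s).bipartiteAbove r t) := by
    intro t
    rw [fiberCard, fiberCard, ← card_product, bipartiteAbove, ← filter_product]
  have hunique : ∀ p ∈ s ×ˢ s, #(s.bipartiteBelow r p) ≤ 1 := by
    intro p _
    refine card_le_one.2 fun t ht t' ht' => ?_
    simp only [bipartiteBelow, mem_filter, r] at ht ht'
    exact hinj ht.1 ht'.1 (Prod.ext (ht.2.1.symm.trans ht'.2.1) (ht.2.2.symm.trans ht'.2.2))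
  calc ∑ t ∈ s, fiberCard s g t * fiberCard s h t
      = ∑ p ∈ s ×ˢ s, #(s.bipartiteBelow r p) := by
        simp_rw [hpair, sum_card_bipartiteAbove_eq_sum_card_bipartiteBelow]
    _ ≤ ∑ p ∈ s ×ˢ s, 1 := sum_le_sum hunique
    _ = #s ^ 2 := by rw [sum_const, card_product, smul_eq_mul, mul_one, sq]

/-- `H(g) + H(h) ≥ H(g, h) = log #s` when `(g, h)` is injective. -/
lemma sum_log_fiberCard_add_log_fiberCard_le (s : Finset ι) (g : ι → κ) (h : ι → κ')
    (hinj : Set.InjOn (fun t => (g t, h t)) s) :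
    ∑ t ∈ s, (log (fiberCard s g t) + log (fiberCard s h t)) ≤ #s * log #s := by
  rcases s.eq_empty_or_nonempty with rfl | hs
  · simp
  have hN : (0 : ℝ) < #s := by exact_mod_cast hs.card_pos
  have hg : ∀ t ∈ s, (0 : ℝ) < fiberCard s g t := fun t ht => by
    exact_mod_cast fiberCard_pos g ht
  have hh : ∀ t ∈ s, (0 : ℝ) < fiberCard s h t := fun t ht => by
    exact_mod_cast fiberCard_pos h ht
  have hsum : ∑ t ∈ s, (fiberCard s g t * fiberCard s h t : ℝ) ≤ #s ^ 2 := by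
    exact_mod_cast sum_fiberCard_mul_fiberCard_le s g h hinj
  rw [sum_congr rfl fun t ht => (log_mul (hg t ht).ne' (hh t ht).ne').symm]
  refine (sum_log_le_card_mul_log_mean s _ fun t ht => mul_pos (hg t ht) (hh t ht)).trans ?_
  gcongr
  · exact div_pos (sum_pos (fun t ht => mul_pos (hg t ht) (hh t ht)) hs) hN
  · rwa [div_le_iff₀ hN, ← sq]

/-- `H(g | f) ≤ E log d(f)`. -/
lemma sum_log_fiberCard_sub_log_fiberCard_le (s : Finset ι) (f : ι → κ) (g : ι → κ')
    (d : κ → ℝ) (hd : ∀ t ∈ s, (#((s.filter (f · = f t)).image g) : ℝ) ≤ d (f t)) :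
    ∑ t ∈ s, (log (fiberCard s f t) - log (fiberCard s (fun u => (f u, g u)) t))
      ≤ ∑ t ∈ s, log (d (f t)) := by
  rw [← sum_fiberwise_of_maps_to (fun t ht => mem_image_of_mem f ht),
    ← sum_fiberwise_of_maps_to (fun t ht => mem_image_of_mem f ht) (f := fun t => log (d (f t)))]
  refine sum_le_sum fun x hx => ?_
  obtain ⟨t₀, ht₀, rfl⟩ := mem_image.1 hx
  set F := s.filter (f · = f t₀) with hF_def
  have hF : F.Nonempty := ⟨t₀, mem_filter.2 ⟨ht₀, rfl⟩⟩
  have hGibbs := card_mul_log_card_add_sum_log_sub_log_fiberCard_le F g (fun _ => 1)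
    fun _ _ => one_pos
  have himage : (0 : ℝ) < #(F.image g) := by exact_mod_cast (hF.image g).card_pos
  have hlog_d : #F * log #(F.image g) ≤ #F * log (d (f t₀)) := by
    gcongr
    exact hd t₀ ht₀
  have hconst : ∑ t ∈ F, log (d (f t)) = #F * log (d (f t₀)) := by
    rw [sum_congr rfl fun t ht => by rw [(mem_filter.1 ht).2], sum_const, nsmul_eq_mul]
  rw [hconst, sum_congr rfl fun t ht => by
    rw [fiberCard_of_mem_filter ht, ← fiberCard_filter g ht], ← hF_def]
  simp only [sum_sub_distrib, sum_const, nsmul_eq_mul, log_one, zero_sub, mul_one,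
    sum_neg_distrib] at hGibbs ⊢
  linarith

/-- `H(g, h | f) ≤ H(g | f) + H(h | f)` when `(f, g, h)` is injective. -/
lemma sum_log_fiberCard_add_log_fiberCard_le_sum_log_fiberCard (s : Finset ι) (f : ι → κ)
    (g : ι → κ') (h : ι → κ'') (hinj : Set.InjOn (fun t => (f t, g t, h t)) s) :
    ∑ t ∈ s, (log (fiberCard s (fun u => (f u, g u)) t)
        + log (fiberCard s (fun u => (f u, h u)) t))
      ≤ ∑ t ∈ s, log (fiberCard s f t) := by
  rw [← sum_fiberwise_of_maps_to (fun t ht => mem_image_of_mem f ht),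
    ← sum_fiberwise_of_maps_to (fun t ht => mem_image_of_mem f ht)
      (f := fun t => log (fiberCard s f t))]
  refine sum_le_sum fun x _ => ?_
  set F := s.filter (f · = x)
  have hinjF : Set.InjOn (fun t => (g t, h t)) F := fun t ht t' ht' he =>
    hinj (mem_filter.1 ht).1 (mem_filter.1 ht').1
      (Prod.ext ((mem_filter.1 ht).2.trans (mem_filter.1 ht').2.symm) he)
  calc ∑ t ∈ F, (log (fiberCard s (fun u => (f u, g u)) t)
        + log (fiberCard s (fun u => (f u, h u)) t))
      = ∑ t ∈ F, (log (fiberCard F g t) + log (fiberCard F h t)) := sum_congr rfl fun t ht => by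
        rw [fiberCard_filter g ht, fiberCard_filter h ht]
    _ ≤ #F * log #F := sum_log_fiberCard_add_log_fiberCard_le F g h hinjF
    _ = ∑ t ∈ F, log (fiberCard s f t) := by
        rw [sum_congr rfl fun t ht => by rw [fiberCard_of_mem_filter ht], sum_const, nsmul_eq_mul]

end Fibers

section Relations

variable {ι α β γ : Type*} [DecidableEq α]

lemma card_image_filter_le_card_filter_fst [DecidableEq β] (s : Finset ι) (X : ι → α)
    (Y : ι → β) (R : Finset (α × β)) (hR : ∀ t ∈ s, (X t, Y t) ∈ R) (x : α) :
    #((s.filter (X · = x)).image Y) ≤ #(R.filter (·.1 = x)) := by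
  refine (card_le_card fun y hy => ?_).trans (card_image_le (f := Prod.snd))
  obtain ⟨u, hu, rfl⟩ := mem_image.1 hy
  obtain ⟨hus, hXu⟩ := mem_filter.1 hu
  exact mem_image.2 ⟨(X u, Y u), mem_filter.2 ⟨hR u hus, hXu⟩, rfl⟩

lemma sum_sq_card_filter_fst_pos [Fintype α] (R : Finset (α × β)) (hR : R.Nonempty) :
    0 < ∑ x, (#(R.filter (·.1 = x)) : ℝ) ^ 2 := by
  obtain ⟨p, hp⟩ := hR
  have hdeg : 0 < #(R.filter (·.1 = p.1)) := card_pos.2 ⟨p, mem_filter.2 ⟨hp, rfl⟩⟩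
  exact sum_pos' (fun _ _ => sq_nonneg _) ⟨p.1, mem_univ _, by positivity⟩

/-- `H(X, Y, Z) + H(X, Y) - H(Z, X) ≤ log ∑ₓ deg_R(x)²`. -/
lemma card_mul_log_card_add_sum_log_fiberCard_le [Fintype α] [DecidableEq β] [DecidableEq γ]
    (s : Finset ι) (X : ι → α) (Y : ι → β) (Z : ι → γ)
    (hinj : Set.InjOn (fun t => (X t, Y t, Z t)) s)
    (R : Finset (α × β)) (hR : ∀ t ∈ s, (X t, Y t) ∈ R) :
    #s * log #s + ∑ t ∈ s, log (fiberCard s (fun u => (Z u, X u)) t)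
      ≤ #s * log (∑ x, (#(R.filter (·.1 = x)) : ℝ) ^ 2)
        + ∑ t ∈ s, log (fiberCard s (fun u => (X u, Y u)) t) := by
  rcases s.eq_empty_or_nonempty with rfl | hs
  · simp
  set d : α → ℝ := fun x => #(R.filter (·.1 = x))
  have hdeg : ∀ t ∈ s, (#((s.filter (X · = X t)).image Y) : ℝ) ≤ d (X t) := fun t _ =>
    Nat.cast_le.2 (card_image_filter_le_card_filter_fst s X Y R hR (X t))
  have hd : ∀ t ∈ s, 0 < d (X t) := fun t ht => by
    have htF : t ∈ s.filter (X · = X t) := mem_filter.2 ⟨ht, rfl⟩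
    refine lt_of_lt_of_le ?_ (hdeg t ht)
    exact_mod_cast card_pos.2 ⟨Y t, mem_image_of_mem Y htF⟩
  have hGibbs := card_mul_log_card_add_sum_log_sub_log_fiberCard_le s X (fun x => d x ^ 2)
    fun t ht => pow_pos (hd t ht) 2
  have hSupport := sum_log_fiberCard_sub_log_fiberCard_le s X Y d hdeg
  have hSubadd := sum_log_fiberCard_add_log_fiberCard_le_sum_log_fiberCard s X Y Z hinj
  rw [fiberCard_swap s Z X] at hSubadd
  have hsq_pos : 0 < ∑ x ∈ s.image X, d x ^ 2 := by
    obtain ⟨t, ht⟩ := hs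
    exact sum_pos' (fun x _ => sq_nonneg _) ⟨X t, mem_image_of_mem X ht, pow_pos (hd t ht) 2⟩
  have hlog_sq : #s * log (∑ x ∈ s.image X, d x ^ 2) ≤ #s * log (∑ x, d x ^ 2) :=
    mul_le_mul_of_nonneg_left
      (log_le_log hsq_pos (sum_le_univ_sum_of_nonneg fun x => sq_nonneg _)) (Nat.cast_nonneg _)
  simp only [log_pow, sum_add_distrib, sum_sub_distrib, ← mul_sum] at hGibbs hSupport hSubadd
  push_cast at hGibbs
  linarith

end Relations

/-- The q-inequality
`|C3| ≤ (‖deg_R(Y|X)‖_2² · ‖deg_S(Z|Y)‖_2² · ‖deg_T(X|Z)‖_2²)^{1/3}`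
for the triangle join. -/
theorem triangle_l2_bound {α β γ : Type*} [Fintype α] [Fintype β] [Fintype γ]
    [DecidableEq α] [DecidableEq β] [DecidableEq γ]
    (R : Finset (α × β)) (S : Finset (β × γ)) (T : Finset (γ × α)) :
    ((Finset.univ.filter
        (fun t : α × β × γ =>
          (t.1, t.2.1) ∈ R ∧ (t.2.1, t.2.2) ∈ S ∧ (t.2.2, t.1) ∈ T)).card : ℝ)
    ≤ ((∑ x, ((R.filter (fun t => t.1 = x)).card : ℝ) ^ 2)
        * (∑ y, ((S.filter (fun t => t.1 = y)).card : ℝ) ^ 2)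
        * (∑ z, ((T.filter (fun t => t.1 = z)).card : ℝ) ^ 2)) ^ ((1 : ℝ) / 3) := by
  set s := univ.filter fun t : α × β × γ =>
    (t.1, t.2.1) ∈ R ∧ (t.2.1, t.2.2) ∈ S ∧ (t.2.2, t.1) ∈ T
  rcases s.eq_empty_or_nonempty with hs | ⟨t₀, ht₀⟩
  · rw [hs, card_empty, Nat.cast_zero]
    exact rpow_nonneg (mul_nonneg (mul_nonneg (sum_nonneg fun _ _ => sq_nonneg _)
      (sum_nonneg fun _ _ => sq_nonneg _)) (sum_nonneg fun _ _ => sq_nonneg _)) _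
  have hmem : ∀ t ∈ s, (t.1, t.2.1) ∈ R ∧ (t.2.1, t.2.2) ∈ S ∧ (t.2.2, t.1) ∈ T :=
    fun t ht => (mem_filter.1 ht).2
  have hX := card_mul_log_card_add_sum_log_fiberCard_le s (·.1) (·.2.1) (·.2.2)
    (fun _ _ _ _ h => by simp only [Prod.mk.injEq] at h; ext <;> tauto) R
    fun t ht => (hmem t ht).1
  have hY := card_mul_log_card_add_sum_log_fiberCard_le s (·.2.1) (·.2.2) (·.1)
    (fun _ _ _ _ h => by simp only [Prod.mk.injEq] at h; ext <;> tauto) S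
    fun t ht => (hmem t ht).2.1
  have hZ := card_mul_log_card_add_sum_log_fiberCard_le s (·.2.2) (·.1) (·.2.1)
    (fun _ _ _ _ h => by simp only [Prod.mk.injEq] at h; ext <;> tauto) T
    fun t ht => (hmem t ht).2.2
  have hA := sum_sq_card_filter_fst_pos R ⟨_, (hmem t₀ ht₀).1⟩
  have hB := sum_sq_card_filter_fst_pos S ⟨_, (hmem t₀ ht₀).2.1⟩
  have hC := sum_sq_card_filter_fst_pos T ⟨_, (hmem t₀ ht₀).2.2⟩
  have hN : (0 : ℝ) < #s := by exact_mod_cast card_pos.2 ⟨t₀, ht₀⟩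
  rw [one_div, le_rpow_inv_iff_of_pos hN.le (mul_pos (mul_pos hA hB) hC).le three_pos,
    ← log_le_log_iff (rpow_pos_of_pos hN 3) (mul_pos (mul_pos hA hB) hC), log_rpow hN,
    log_mul (mul_pos hA hB).ne' hC.ne', log_mul hA.ne' hB.ne']
  exact le_of_mul_le_mul_left (by linarith) hN
end

section
/- Let R ⊆ α × β, S ⊆ β × γ, T ⊆ γ × α be finite relations and let C3 = {(x,y,z) : (x,y) ∈ R, (y,z) ∈ S, (z,x) ∈ T} be the triangle join. Then |C3| ≤ ( (Σ_{x ∈ α} |{y : (x,y) ∈ R}|³) · (Σ_{z ∈ γ} |{y : (y,z) ∈ S}|³) · |T|⁵ )^{1/6}. (The q-inequality |C3| ≤ (‖deg_R(Y|X)‖_3³ · ‖deg_S(Y|Z)‖_3³ · |T|⁵)^{1/6}.) -/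
/-!
Write the triangle count as `∑_{(z,x) ∈ T} e(z,x)`, where `e(z,x)` counts the `y` with
`(x,y) ∈ R` and `(y,z) ∈ S`. Since `e(z,x) ≤ deg_R x` and `e(z,x) ≤ deg_S z`, Cauchy–Schwarz
gives `N² ≤ |T| · P` with `P = ∑_{(z,x) ∈ T} deg_R x · deg_S z`. Hölder with exponents `(3,3,3)`
applied to `deg_R x / c(x)^{1/3}`, `deg_S z / d(z)^{1/3}` and `(c(x) d(z))^{1/3}`, where `c` and
`d` are the degrees in `T`, bounds `P³` by `‖deg_R‖₃³ · ‖deg_S‖₃³ · ∑_{(z,x) ∈ T} c(x) d(z)`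
(each `x` occurs `c(x)` times, with weight `1 / c(x)`); the last sum counts paths `q, p, r` in `T`
with `q, p` sharing `x` and `p, r` sharing `z`, and `(q, r)` determines `p`, so it is at most
`|T|²`. Hence `N⁶ ≤ ‖deg_R‖₃³ ‖deg_S‖₃³ |T|⁵`.
-/

open Finset

section Sums

variable {ι : Type*} (s : Finset ι)

theorem Real.sum_mul_mul_cube_le_cube_mul_cube_mul_cube (f g h : ι → ℝ) (hf : ∀ i ∈ s, 0 ≤ f i)
    (hg : ∀ i ∈ s, 0 ≤ g i) (hh : ∀ i ∈ s, 0 ≤ h i) :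
    (∑ i ∈ s, f i * g i * h i) ^ 3
      ≤ (∑ i ∈ s, f i ^ 3) * (∑ i ∈ s, g i ^ 3) * ∑ i ∈ s, h i ^ 3 := by
  set F := ∑ i ∈ s, f i ^ 3
  set W := ∑ i ∈ s, (g i * h i) ^ (3 / 2 : ℝ)
  have hgh : ∀ i ∈ s, 0 ≤ g i * h i := fun i hi => mul_nonneg (hg i hi) (hh i hi)
  have hF : 0 ≤ F := sum_nonneg fun i hi => pow_nonneg (hf i hi) 3
  have hW : 0 ≤ W := sum_nonneg fun i hi => Real.rpow_nonneg (hgh i hi) _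
  have holder_fgh : ∑ i ∈ s, f i * g i * h i ≤ F ^ (3⁻¹ : ℝ) * W ^ (2 / 3 : ℝ) := by
    have := Real.inner_le_Lp_mul_Lq_of_nonneg s
      (Real.holderConjugate_iff.mpr ⟨by norm_num, by norm_num⟩ : Real.HolderConjugate 3 (3 / 2))
      hf hgh
    simp only [Real.rpow_ofNat, ← mul_assoc] at this
    convert this using 3 <;> norm_num
  have holder_gh : W ^ 2 ≤ (∑ i ∈ s, g i ^ 3) * ∑ i ∈ s, h i ^ 3 := by
    have := Real.Lr_rpow_le_Lp_mul_Lq_of_nonneg s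
      (⟨by norm_num, by norm_num, by norm_num⟩ : Real.HolderTriple 3 3 (3 / 2)) hg hh
    simp only [Real.rpow_ofNat] at this
    norm_num at this
    have hG : 0 ≤ ∑ i ∈ s, g i ^ 3 := sum_nonneg fun i hi => pow_nonneg (hg i hi) 3
    have hH : 0 ≤ ∑ i ∈ s, h i ^ 3 := sum_nonneg fun i hi => pow_nonneg (hh i hi) 3
    calc W ^ 2 ≤ ((∑ i ∈ s, g i ^ 3) ^ (1 / 2 : ℝ) * (∑ i ∈ s, h i ^ 3) ^ (1 / 2 : ℝ)) ^ 2 := by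
          gcongr
      _ = _ := by
          rw [mul_pow, ← Real.rpow_mul_natCast hG, ← Real.rpow_mul_natCast hH]
          norm_num
  calc (∑ i ∈ s, f i * g i * h i) ^ 3 ≤ (F ^ (3⁻¹ : ℝ) * W ^ (2 / 3 : ℝ)) ^ 3 := by
        gcongr
        exact sum_nonneg fun i hi => mul_nonneg (mul_nonneg (hf i hi) (hg i hi)) (hh i hi)
    _ = F * W ^ 2 := by
        rw [mul_pow, ← Real.rpow_mul_natCast hF, ← Real.rpow_mul_natCast hW]
        norm_num
    _ ≤ _ := by rw [mul_assoc]; gcongr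

theorem Real.sum_mul_cube_le_of_pos_weights (a b c d : ι → ℝ) (ha : ∀ i ∈ s, 0 ≤ a i)
    (hb : ∀ i ∈ s, 0 ≤ b i) (hc : ∀ i ∈ s, 0 < c i) (hd : ∀ i ∈ s, 0 < d i) :
    (∑ i ∈ s, a i * b i) ^ 3
      ≤ (∑ i ∈ s, a i ^ 3 / c i) * (∑ i ∈ s, b i ^ 3 / d i) * ∑ i ∈ s, c i * d i := by
  have cbrt_pow_three : ∀ u : ℝ, 0 ≤ u → (u ^ (3⁻¹ : ℝ)) ^ 3 = u := fun u hu => by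
    simpa using Real.rpow_inv_natCast_pow hu (n := 3) three_ne_zero
  have key := Real.sum_mul_mul_cube_le_cube_mul_cube_mul_cube s (fun i => a i / c i ^ (3⁻¹ : ℝ))
    (fun i => b i / d i ^ (3⁻¹ : ℝ)) (fun i => c i ^ (3⁻¹ : ℝ) * d i ^ (3⁻¹ : ℝ))
    (fun i hi => div_nonneg (ha i hi) (Real.rpow_nonneg (hc i hi).le _))
    (fun i hi => div_nonneg (hb i hi) (Real.rpow_nonneg (hd i hi).le _))
    (fun i hi => mul_nonneg (Real.rpow_nonneg (hc i hi).le _) (Real.rpow_nonneg (hd i hi).le _))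
  convert key using 3 with i hi i hi
  · have hc' := Real.rpow_pos_of_pos (hc i hi) (3⁻¹ : ℝ)
    have hd' := Real.rpow_pos_of_pos (hd i hi) (3⁻¹ : ℝ)
    rw [div_mul_div_comm, div_mul_cancel₀ _ (mul_pos hc' hd').ne']
  · exact sum_congr rfl fun i hi => by rw [div_pow, cbrt_pow_three _ (hc i hi).le]
  · exact sum_congr rfl fun i hi => by rw [div_pow, cbrt_pow_three _ (hd i hi).le]
  · rw [mul_pow, cbrt_pow_three _ (hc i hi).le, cbrt_pow_three _ (hd i hi).le]

theorem Finset.sum_div_card_fiber_le {κ : Type*} [Fintype κ] [DecidableEq κ] (m : ι → κ)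
    (ψ : κ → ℝ) (hψ : ∀ k, 0 ≤ ψ k) :
    ∑ i ∈ s, ψ (m i) / #{j ∈ s | m j = m i} ≤ ∑ k, ψ k := by
  rw [← sum_fiberwise_of_maps_to (g := m) (t := univ) (fun i _ => mem_univ (m i))]
  refine sum_le_sum fun k _ => ?_
  rw [sum_congr rfl fun i hi => by rw [(mem_filter.1 hi).2], sum_const, nsmul_eq_mul]
  rcases eq_or_ne #{j ∈ s | m j = k} 0 with h | h
  · simp [h, hψ k]
  · rw [mul_div_cancel₀ _ (by exact_mod_cast h)]

end Sums

section Relations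

variable {α β γ : Type*} [DecidableEq α] [DecidableEq β] [DecidableEq γ]

theorem card_filter_mem_left_le [Fintype β] (R : Finset (α × β)) (x : α) (P : β → Prop)
    [DecidablePred P] : #{y | (x, y) ∈ R ∧ P y} ≤ #{t ∈ R | t.1 = x} :=
  card_le_card_of_injOn (fun y => (x, y)) (fun y hy => by simp_all)
    (fun _ _ _ _ h => (Prod.ext_iff.1 h).2)

theorem card_filter_mem_right_le [Fintype β] (S : Finset (β × γ)) (z : γ) (P : β → Prop)
    [DecidablePred P] : #{y | P y ∧ (y, z) ∈ S} ≤ #{t ∈ S | t.2 = z} :=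
  card_le_card_of_injOn (fun y => (y, z)) (fun y hy => by simp_all)
    (fun _ _ _ _ h => (Prod.ext_iff.1 h).1)

theorem card_triangles_eq_sum_card_common [Fintype α] [Fintype β] [Fintype γ]
    (R : Finset (α × β)) (S : Finset (β × γ)) (T : Finset (γ × α)) :
    #{t : α × β × γ | (t.1, t.2.1) ∈ R ∧ (t.2.1, t.2.2) ∈ S ∧ (t.2.2, t.1) ∈ T}
      = ∑ p ∈ T, #{y | (p.2, y) ∈ R ∧ (y, p.1) ∈ S} := by
  rw [card_eq_sum_card_fiberwise (f := fun t : α × β × γ => (t.2.2, t.1)) (t := T)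
    (fun t ht => (mem_filter.1 ht).2.2.2)]
  refine sum_congr rfl fun p _ => card_nbij' (fun t => t.2.1) (fun y => (p.2, y, p.1))
    ?_ ?_ ?_ ?_
  · rintro ⟨x, y, z⟩ ht
    simp only [mem_coe, mem_filter, mem_univ, true_and] at ht
    obtain ⟨⟨hR, hS, -⟩, rfl⟩ := ht
    simpa using ⟨hR, hS⟩
  · intro y hy
    simp_all
  · rintro ⟨x, y, z⟩ ht
    simp only [mem_coe, mem_filter, mem_univ, true_and] at ht
    obtain ⟨-, rfl⟩ := ht
    rfl
  · intro y hy
    rfl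

theorem sum_card_fiber_snd_mul_card_fiber_fst_le_card_sq (T : Finset (γ × α)) :
    ∑ p ∈ T, #{q ∈ T | q.2 = p.2} * #{q ∈ T | q.1 = p.1} ≤ #T ^ 2 := by
  -- `p = (r.1, q.2)` is recovered from `(q, r)`, so the triples `(p, q, r)` inject into `T × T`.
  simp_rw [← card_product]
  rw [← card_sigma, sq, ← card_product]
  refine card_le_card_of_injOn (fun x => x.2) ?_ ?_
  · intro x hx
    simp_all
  · rintro ⟨p, q, r⟩ h ⟨p', q', r'⟩ h' heq
    simp only [coe_sigma, Set.mem_sigma_iff, coe_product, Set.mem_prod, coe_filter,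
      Set.mem_ofPred_eq] at h h'
    obtain ⟨rfl, rfl⟩ := Prod.mk.inj heq
    obtain rfl : p = p' := Prod.ext (h.2.2.2.symm.trans h'.2.2.2) (h.2.1.2.symm.trans h'.2.1.2)
    rfl

theorem sq_card_triangles_le [Fintype α] [Fintype β] [Fintype γ] (R : Finset (α × β))
    (S : Finset (β × γ)) (T : Finset (γ × α)) :
    (#{t : α × β × γ | (t.1, t.2.1) ∈ R ∧ (t.2.1, t.2.2) ∈ S ∧ (t.2.2, t.1) ∈ T} : ℝ) ^ 2
      ≤ #T * ∑ p ∈ T, (#{t ∈ R | t.1 = p.2} : ℝ) * #{t ∈ S | t.2 = p.1} := by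
  rw [card_triangles_eq_sum_card_common, Nat.cast_sum]
  refine sq_sum_le_card_mul_sum_sq.trans (mul_le_mul_of_nonneg_left (sum_le_sum fun p _ => ?_)
    (Nat.cast_nonneg _))
  rw [sq]
  exact_mod_cast Nat.mul_le_mul (card_filter_mem_left_le R p.2 _)
    (card_filter_mem_right_le S p.1 _)

theorem sum_mul_cube_le_of_edges [Fintype α] [Fintype γ] (T : Finset (γ × α)) (a : α → ℝ)
    (b : γ → ℝ) (ha : ∀ x, 0 ≤ a x) (hb : ∀ z, 0 ≤ b z) :
    (∑ p ∈ T, a p.2 * b p.1) ^ 3 ≤ (∑ x, a x ^ 3) * (∑ z, b z ^ 3) * (#T : ℝ) ^ 2 := by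
  refine (Real.sum_mul_cube_le_of_pos_weights T (fun p => a p.2) (fun p => b p.1)
    (fun p => #{q ∈ T | q.2 = p.2}) (fun p => #{q ∈ T | q.1 = p.1})
    (fun p _ => ha p.2) (fun p _ => hb p.1)
    (fun p hp => Nat.cast_pos.2 (card_pos.2 ⟨p, mem_filter.2 ⟨hp, rfl⟩⟩))
    (fun p hp => Nat.cast_pos.2 (card_pos.2 ⟨p, mem_filter.2 ⟨hp, rfl⟩⟩))).trans ?_
  have hA := sum_div_card_fiber_le T Prod.snd (fun x => a x ^ 3) fun x => pow_nonneg (ha x) 3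
  have hB := sum_div_card_fiber_le T Prod.fst (fun z => b z ^ 3) fun z => pow_nonneg (hb z) 3
  have paths : ∑ p ∈ T, (#{q ∈ T | q.2 = p.2} : ℝ) * #{q ∈ T | q.1 = p.1} ≤ (#T : ℝ) ^ 2 := by
    exact_mod_cast sum_card_fiber_snd_mul_card_fiber_fst_le_card_sq T
  have hA₀ : 0 ≤ ∑ x, a x ^ 3 := sum_nonneg fun x _ => pow_nonneg (ha x) 3
  have hB₀ : 0 ≤ ∑ z, b z ^ 3 := sum_nonneg fun z _ => pow_nonneg (hb z) 3
  exact mul_le_mul (mul_le_mul hA hB (sum_nonneg fun p _ => by have := hb p.1; positivity) hA₀)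
    paths (by positivity) (mul_nonneg hA₀ hB₀)

end Relations

/-- The q-inequality
`|C3| ≤ (‖deg_R(Y|X)‖_3³ · ‖deg_S(Y|Z)‖_3³ · |T|⁵)^{1/6}` for the triangle join. -/
theorem triangle_l3_bound {α β γ : Type*} [Fintype α] [Fintype β] [Fintype γ]
    [DecidableEq α] [DecidableEq β] [DecidableEq γ]
    (R : Finset (α × β)) (S : Finset (β × γ)) (T : Finset (γ × α)) :
    ((Finset.univ.filter
        (fun t : α × β × γ =>
          (t.1, t.2.1) ∈ R ∧ (t.2.1, t.2.2) ∈ S ∧ (t.2.2, t.1) ∈ T)).card : ℝ)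
    ≤ ((∑ x, ((R.filter (fun t => t.1 = x)).card : ℝ) ^ 3)
        * (∑ z, ((S.filter (fun t => t.2 = z)).card : ℝ) ^ 3)
        * (T.card : ℝ) ^ 5) ^ ((1 : ℝ) / 6) := by
  have combine : ∀ {x t P Q : ℝ}, 0 ≤ t → x ^ 2 ≤ t * P → P ^ 3 ≤ Q * t ^ 2 →
      x ^ 6 ≤ Q * t ^ 5 := fun {x t P Q} ht h₁ h₂ =>
    calc x ^ 6 = (x ^ 2) ^ 3 := by ring
      _ ≤ (t * P) ^ 3 := pow_le_pow_left₀ (sq_nonneg x) h₁ 3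
      _ = t ^ 3 * P ^ 3 := by ring
      _ ≤ t ^ 3 * (Q * t ^ 2) := by gcongr
      _ = Q * t ^ 5 := by ring
  rw [one_div, Real.le_rpow_inv_iff_of_pos (by positivity) (by positivity) (by norm_num),
    Real.rpow_ofNat]
  have h1 := sq_card_triangles_le R S T
  have h2 := sum_mul_cube_le_of_edges T (fun x => (#{t ∈ R | t.1 = x} : ℝ))
    (fun z => (#{t ∈ S | t.2 = z} : ℝ)) (fun _ => Nat.cast_nonneg _) (fun _ => Nat.cast_nonneg _)
  exact combine (Nat.cast_nonneg _) h1 h2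
end

section
/- Let R1 ⊆ α₁ × γ, R2 ⊆ α₂ × γ, S ⊆ β × γ be finite relations, let Star = {(x1,x2,y,z) : (x1,z) ∈ R1, (x2,z) ∈ R2, (y,z) ∈ S} be the full star join, and let StarG = {(x1,x2) : ∃ y z, (x1,x2,y,z) ∈ Star} be its projection onto the group-by variables (X1, X2). Then |StarG| ≤ |S|^{1/3} · (Σ_{z ∈ γ} |{x1 : (x1,z) ∈ R1}|³)^{1/3} · (Σ_{z ∈ γ} |{x2 : (x2,z) ∈ R2}|³)^{1/3}. (The group-by q-inequality |StarG| ≤ |S|^{1/3} · ‖deg_{R1}(X1|Z)‖_3 · ‖deg_{R2}(X2|Z)‖_3.) -/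
open Finset Real

open Finset Real

lemma holder3 {γ : Type*} (T : Finset γ) (f g : γ → ℝ)
    (hf : ∀ z, 0 ≤ f z) (hg : ∀ z, 0 ≤ g z) :
    ∑ z ∈ T, f z * g z
      ≤ (T.card : ℝ) ^ ((1:ℝ)/3) * (∑ z ∈ T, f z ^ (3:ℝ)) ^ ((1:ℝ)/3)
        * (∑ z ∈ T, g z ^ (3:ℝ)) ^ ((1:ℝ)/3) := by
  have hconj : Real.HolderConjugate 3 (3/2) := by constructor <;> norm_num
  have hconj2 : Real.HolderConjugate 2 2 := by constructor <;> norm_num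
  have h1 := Real.inner_le_Lp_mul_Lq_of_nonneg T hconj
      (fun z _ => hf z) (fun z _ => hg z)
  have h2 := Real.inner_le_Lp_mul_Lq_of_nonneg (f := fun _ => (1:ℝ))
      (g := fun z => g z ^ ((3:ℝ)/2)) T hconj2
      (fun z _ => zero_le_one) (fun z _ => rpow_nonneg (hg z) _)
  simp only [one_mul, one_rpow, sum_const, nsmul_eq_mul, mul_one] at h2
  have hg32 : ∀ z, (g z ^ ((3:ℝ)/2)) ^ (2:ℝ) = g z ^ (3:ℝ) := by
    intro z
    rw [← Real.rpow_mul (hg z)]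
    norm_num
  have h2' : ∑ z ∈ T, g z ^ ((3:ℝ)/2)
      ≤ (T.card : ℝ) ^ ((1:ℝ)/2) * (∑ z ∈ T, g z ^ (3:ℝ)) ^ ((1:ℝ)/2) := by
    refine h2.trans_eq ?_
    congr 1
    congr 1
    exact Finset.sum_congr rfl fun z _ => hg32 z
  have hsum3 : (0:ℝ) ≤ ∑ z ∈ T, g z ^ (3:ℝ) :=
    Finset.sum_nonneg fun z _ => rpow_nonneg (hg z) _
  have key : (∑ z ∈ T, g z ^ ((3:ℝ)/2)) ^ ((1:ℝ)/(3/2))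
      ≤ (T.card : ℝ) ^ ((1:ℝ)/3) * (∑ z ∈ T, g z ^ (3:ℝ)) ^ ((1:ℝ)/3) := by
    have hle := Real.rpow_le_rpow
      (Finset.sum_nonneg fun z _ => rpow_nonneg (hg z) _) h2' (by norm_num : (0:ℝ) ≤ 1/(3/2))
    refine hle.trans_eq ?_
    rw [Real.mul_rpow (by positivity) (by positivity),
      ← Real.rpow_mul (by positivity), ← Real.rpow_mul hsum3]
    norm_num
  calc ∑ z ∈ T, f z * g z
      ≤ (∑ z ∈ T, f z ^ (3:ℝ)) ^ ((1:ℝ)/3) * (∑ z ∈ T, g z ^ ((3:ℝ)/2)) ^ ((1:ℝ)/(3/2)) := h1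
    _ ≤ (∑ z ∈ T, f z ^ (3:ℝ)) ^ ((1:ℝ)/3)
        * ((T.card : ℝ) ^ ((1:ℝ)/3) * (∑ z ∈ T, g z ^ (3:ℝ)) ^ ((1:ℝ)/3)) := by
        exact mul_le_mul_of_nonneg_left key (Real.rpow_nonneg (Finset.sum_nonneg fun z _ => rpow_nonneg (hf z) _) _)
    _ = _ := by ring

lemma step2 {γ : Type*} [Fintype γ] (T : Finset γ) (d1 d2 : γ → ℝ)
    (hd1n : ∀ z, 0 ≤ d1 z) (hd2n : ∀ z, 0 ≤ d2 z) (n : ℕ) (hTS : (T.card : ℝ) ≤ (n:ℝ)) :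
    ∑ z ∈ T, d1 z * d2 z
      ≤ (n : ℝ) ^ ((1:ℝ)/3) * (∑ z, d1 z ^ 3) ^ ((1:ℝ)/3)
        * (∑ z, d2 z ^ 3) ^ ((1:ℝ)/3) := by
  have hhold := holder3 T d1 d2 hd1n hd2n
  have hs1 : ∑ z ∈ T, d1 z ^ (3:ℝ) ≤ ∑ z, d1 z ^ (3:ℝ) :=
    Finset.sum_le_sum_of_subset_of_nonneg (Finset.subset_univ T)
      (fun z _ _ => rpow_nonneg (hd1n z) _)
  have hs2 : ∑ z ∈ T, d2 z ^ (3:ℝ) ≤ ∑ z, d2 z ^ (3:ℝ) :=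
    Finset.sum_le_sum_of_subset_of_nonneg (Finset.subset_univ T)
      (fun z _ _ => rpow_nonneg (hd2n z) _)
  have hrw : ∀ (d : γ → ℝ), (∀ z, 0 ≤ d z) →
      (∑ z, d z ^ (3:ℝ)) = ∑ z, d z ^ 3 := by
    intro d hd
    refine Finset.sum_congr rfl fun z _ => ?_
    rw [show (3:ℝ) = ((3:ℕ):ℝ) by norm_num, Real.rpow_natCast]
  refine hhold.trans ?_
  rw [← hrw d1 hd1n, ← hrw d2 hd2n]
  have h3 : (0:ℝ) ≤ (1:ℝ)/3 := by norm_num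
  have m1 : (T.card : ℝ) ^ ((1:ℝ)/3) ≤ (n : ℝ) ^ ((1:ℝ)/3) :=
    Real.rpow_le_rpow (Nat.cast_nonneg _) hTS h3
  have m2 : (∑ z ∈ T, d1 z ^ (3:ℝ)) ^ ((1:ℝ)/3) ≤ (∑ z, d1 z ^ (3:ℝ)) ^ ((1:ℝ)/3) :=
    Real.rpow_le_rpow (Finset.sum_nonneg fun z _ => rpow_nonneg (hd1n z) _) hs1 h3
  have m3 : (∑ z ∈ T, d2 z ^ (3:ℝ)) ^ ((1:ℝ)/3) ≤ (∑ z, d2 z ^ (3:ℝ)) ^ ((1:ℝ)/3) :=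
    Real.rpow_le_rpow (Finset.sum_nonneg fun z _ => rpow_nonneg (hd2n z) _) hs2 h3
  have p1 : (0:ℝ) ≤ (T.card : ℝ) ^ ((1:ℝ)/3) := Real.rpow_nonneg (Nat.cast_nonneg _) _
  have p2 : (0:ℝ) ≤ (∑ z ∈ T, d1 z ^ (3:ℝ)) ^ ((1:ℝ)/3) :=
    Real.rpow_nonneg (Finset.sum_nonneg fun z _ => rpow_nonneg (hd1n z) _) _
  have p3 : (0:ℝ) ≤ (∑ z ∈ T, d2 z ^ (3:ℝ)) ^ ((1:ℝ)/3) :=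
    Real.rpow_nonneg (Finset.sum_nonneg fun z _ => rpow_nonneg (hd2n z) _) _
  have p2' : (0:ℝ) ≤ (∑ z, d1 z ^ (3:ℝ)) ^ ((1:ℝ)/3) :=
    Real.rpow_nonneg (Finset.sum_nonneg fun z _ => rpow_nonneg (hd1n z) _) _
  exact mul_le_mul (mul_le_mul m1 m2 p2 (le_trans p1 m1)) m3 p3
    (mul_nonneg (le_trans p1 m1) p2')

/-- The group-by q-inequality
`|StarG| ≤ |S|^{1/3} · ‖deg_{R1}(X1|Z)‖_3 · ‖deg_{R2}(X2|Z)‖_3`, where `StarG` is the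
projection of the full star join onto the group-by variables `(X1, X2)`. -/
theorem star_groupby_bound {α₁ α₂ β γ : Type*}
    [Fintype α₁] [Fintype α₂] [Fintype β] [Fintype γ]
    [DecidableEq α₁] [DecidableEq α₂] [DecidableEq β] [DecidableEq γ]
    (R1 : Finset (α₁ × γ)) (R2 : Finset (α₂ × γ)) (S : Finset (β × γ)) :
    ((Finset.univ.filter
        (fun t : α₁ × α₂ =>
          ∃ y : β, ∃ z : γ, (t.1, z) ∈ R1 ∧ (t.2, z) ∈ R2 ∧ (y, z) ∈ S)).card : ℝ)
    ≤ (S.card : ℝ) ^ ((1 : ℝ) / 3)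
      * (∑ z, ((R1.filter (fun t => t.2 = z)).card : ℝ) ^ 3) ^ ((1 : ℝ) / 3)
      * (∑ z, ((R2.filter (fun t => t.2 = z)).card : ℝ) ^ 3) ^ ((1 : ℝ) / 3) := by
  classical
  set T : Finset γ := S.image Prod.snd with hT
  set d1 : γ → ℝ := fun z => ((R1.filter (fun t => t.2 = z)).card : ℝ) with hd1
  set d2 : γ → ℝ := fun z => ((R2.filter (fun t => t.2 = z)).card : ℝ) with hd2
  have hd1n : ∀ z, 0 ≤ d1 z := fun z => Nat.cast_nonneg _
  have hd2n : ∀ z, 0 ≤ d2 z := fun z => Nat.cast_nonneg _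
  -- Step 1: combinatorial bound
  have hsub : (Finset.univ.filter
        (fun t : α₁ × α₂ =>
          ∃ y : β, ∃ z : γ, (t.1, z) ∈ R1 ∧ (t.2, z) ∈ R2 ∧ (y, z) ∈ S))
      ⊆ T.biUnion (fun z =>
          ((R1.filter (fun t => t.2 = z)).image Prod.fst) ×ˢ
          ((R2.filter (fun t => t.2 = z)).image Prod.fst)) := by
    intro t ht
    simp only [mem_filter, mem_univ, true_and] at ht
    obtain ⟨y, z, h1, h2, h3⟩ := ht
    refine Finset.mem_biUnion.2 ⟨z, ?_, ?_⟩
    · exact Finset.mem_image.2 ⟨(y, z), h3, rfl⟩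
    · refine Finset.mem_product.2 ⟨?_, ?_⟩
      · exact Finset.mem_image.2 ⟨(t.1, z), Finset.mem_filter.2 ⟨h1, rfl⟩, rfl⟩
      · exact Finset.mem_image.2 ⟨(t.2, z), Finset.mem_filter.2 ⟨h2, rfl⟩, rfl⟩
  have hcard : ((Finset.univ.filter
        (fun t : α₁ × α₂ =>
          ∃ y : β, ∃ z : γ, (t.1, z) ∈ R1 ∧ (t.2, z) ∈ R2 ∧ (y, z) ∈ S)).card : ℝ)
      ≤ ∑ z ∈ T, d1 z * d2 z := by
    have h1 : (Finset.univ.filter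
        (fun t : α₁ × α₂ =>
          ∃ y : β, ∃ z : γ, (t.1, z) ∈ R1 ∧ (t.2, z) ∈ R2 ∧ (y, z) ∈ S)).card
        ≤ ∑ z ∈ T, ((R1.filter (fun t => t.2 = z)).card *
            (R2.filter (fun t => t.2 = z)).card) := by
      refine (Finset.card_le_card hsub).trans ((Finset.card_biUnion_le).trans ?_)
      refine Finset.sum_le_sum fun z _ => ?_
      rw [Finset.card_product]
      exact Nat.mul_le_mul (Finset.card_image_le) (Finset.card_image_le)
    calc ((Finset.univ.filter
        (fun t : α₁ × α₂ =>
          ∃ y : β, ∃ z : γ, (t.1, z) ∈ R1 ∧ (t.2, z) ∈ R2 ∧ (y, z) ∈ S)).card : ℝ)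
        ≤ ((∑ z ∈ T, ((R1.filter (fun t => t.2 = z)).card *
            (R2.filter (fun t => t.2 = z)).card) : ℕ) : ℝ) := Nat.cast_le.2 h1
      _ = ∑ z ∈ T, d1 z * d2 z := by push_cast; rfl
  have hTS : (T.card : ℝ) ≤ (S.card : ℝ) := Nat.cast_le.2 Finset.card_image_le
  exact hcard.trans (step2 T d1 d2 hd1n hd2n S.card hTS)
end

section
/- Let R1 ⊆ α₁ × γ, R2 ⊆ α₂ × γ, S ⊆ β × γ be finite relations, let Star = {(x1,x2,y,z) : (x1,z) ∈ R1, (x2,z) ∈ R2, (y,z) ∈ S} and let StarG = {(x1,x2) : ∃ y z, (x1,x2,y,z) ∈ Star}. Then |StarG| ≤ |π_Z(S)|^{1/3} · (Σ_{z ∈ γ} |{x1 : (x1,z) ∈ R1}|³)^{1/3} · (Σ_{z ∈ γ} |{x2 : (x2,z) ∈ R2}|³)^{1/3}, where π_Z(S) = {z : ∃ y, (y,z) ∈ S} is the active domain of the Z-column of S. (The improved group-by q-inequality |StarG| ≤ |Dom(S.Z)|^{1/3} · ‖deg_{R1}(X1|Z)‖_3 · ‖deg_{R2}(X2|Z)‖_3,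 which implies the bound with |S|^{1/3} since |π_Z(S)| ≤ |S|.) -/
/-! Every pair `(x₁, x₂)` of the group-by output is witnessed by some `z ∈ π_Z(S)` with
`x₁ ∈ R1(·, z)` and `x₂ ∈ R2(·, z)`, so the output has at most
`∑_{z ∈ π_Z(S)} deg_{R1}(z) · deg_{R2}(z)` elements. Hölder's inequality for the three functions
`1, deg_{R1}, deg_{R2}` on `π_Z(S)`, each in `ℓ³`, bounds this sum by
`|π_Z(S)|^{1/3} ‖deg_{R1}‖₃ ‖deg_{R2}‖₃`. -/

open Finset Real

theorem Real.sum_mul_le_card_rpow_mul_Lp_mul_Lq {ι : Type*} (s : Finset ι) {f g : ι → ℝ}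
    {p q r : ℝ} (hpqr : p.HolderTriple q r) (hr : 1 ≤ r) (hf : ∀ i, 0 ≤ f i)
    (hg : ∀ i, 0 ≤ g i) :
    ∑ i ∈ s, f i * g i
      ≤ (#s : ℝ) ^ (1 - r⁻¹) * ((∑ i ∈ s, f i ^ p) ^ p⁻¹ * (∑ i ∈ s, g i ^ q) ^ q⁻¹) := by
  have hfg i : 0 ≤ f i * g i := mul_nonneg (hf i) (hg i)
  have hA : 0 ≤ ∑ i ∈ s, f i ^ p := sum_nonneg fun i _ => rpow_nonneg (hf i) p
  have hB : 0 ≤ ∑ i ∈ s, g i ^ q := sum_nonneg fun i _ => rpow_nonneg (hg i) q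
  have hpow : ∑ i ∈ s, f i * g i ≤ (#s : ℝ) ^ (1 - r⁻¹) * (∑ i ∈ s, (f i * g i) ^ r) ^ r⁻¹ := by
    simpa using inner_le_weight_mul_Lp_of_nonneg s hr (fun _ => 1) _ (fun _ => zero_le_one) hfg
  have hholder : (∑ i ∈ s, (f i * g i) ^ r) ^ r⁻¹
      ≤ (∑ i ∈ s, f i ^ p) ^ p⁻¹ * (∑ i ∈ s, g i ^ q) ^ q⁻¹ := by
    calc (∑ i ∈ s, (f i * g i) ^ r) ^ r⁻¹
        ≤ ((∑ i ∈ s, f i ^ p) ^ (r / p) * (∑ i ∈ s, g i ^ q) ^ (r / q)) ^ r⁻¹ := by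
          gcongr
          · exact sum_nonneg fun i _ => rpow_nonneg (hfg i) r
          · exact Lr_rpow_le_Lp_mul_Lq_of_nonneg s hpqr (fun i _ => hf i) (fun i _ => hg i)
      _ = (∑ i ∈ s, f i ^ p) ^ p⁻¹ * (∑ i ∈ s, g i ^ q) ^ q⁻¹ := by
          rw [mul_rpow (rpow_nonneg hA _) (rpow_nonneg hB _), ← rpow_mul hA, ← rpow_mul hB]
          field_simp [hpqr.ne_zero']
  exact hpow.trans (by gcongr)

theorem Finset.card_le_sum_card_filter_mul_card_filter {α₁ α₂ γ : Type*} [DecidableEq α₁]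
    [DecidableEq α₂] [DecidableEq γ] (R1 : Finset (α₁ × γ)) (R2 : Finset (α₂ × γ))
    (D : Finset γ) (T : Finset (α₁ × α₂))
    (hT : ∀ t ∈ T, ∃ z ∈ D, (t.1, z) ∈ R1 ∧ (t.2, z) ∈ R2) :
    #T ≤ ∑ z ∈ D, #(R1.filter (fun t => t.2 = z)) * #(R2.filter (fun t => t.2 = z)) :=
  calc #T ≤ #(D.biUnion fun z =>
          (R1.filter (fun t => t.2 = z)).image Prod.fst ×ˢ
            (R2.filter (fun t => t.2 = z)).image Prod.fst) := by
        refine card_le_card fun t ht => ?_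
        obtain ⟨z, hz, h1, h2⟩ := hT t ht
        exact mem_biUnion.2 ⟨z, hz, mem_product.2
          ⟨mem_image.2 ⟨_, mem_filter.2 ⟨h1, rfl⟩, rfl⟩,
            mem_image.2 ⟨_, mem_filter.2 ⟨h2, rfl⟩, rfl⟩⟩⟩
    _ ≤ ∑ z ∈ D, #((R1.filter (fun t => t.2 = z)).image Prod.fst ×ˢ
            (R2.filter (fun t => t.2 = z)).image Prod.fst) := card_biUnion_le
    _ ≤ _ := sum_le_sum fun z _ => by
        rw [card_product]
        exact Nat.mul_le_mul card_image_le card_image_le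

/-- The improved group-by q-inequality
`|StarG| ≤ |Dom(S.Z)|^{1/3} · ‖deg_{R1}(X1|Z)‖_3 · ‖deg_{R2}(X2|Z)‖_3`, where
`Dom(S.Z) = π_Z(S)` is the active domain of the `Z`-column of `S`. -/
theorem star_groupby_domain_bound {α₁ α₂ β γ : Type*}
    [Fintype α₁] [Fintype α₂] [Fintype β] [Fintype γ]
    [DecidableEq α₁] [DecidableEq α₂] [DecidableEq β] [DecidableEq γ]
    (R1 : Finset (α₁ × γ)) (R2 : Finset (α₂ × γ)) (S : Finset (β × γ)) :
    ((Finset.univ.filter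
        (fun t : α₁ × α₂ =>
          ∃ y : β, ∃ z : γ, (t.1, z) ∈ R1 ∧ (t.2, z) ∈ R2 ∧ (y, z) ∈ S)).card : ℝ)
    ≤ ((S.image Prod.snd).card : ℝ) ^ ((1 : ℝ) / 3)
      * (∑ z, ((R1.filter (fun t => t.2 = z)).card : ℝ) ^ 3) ^ ((1 : ℝ) / 3)
      * (∑ z, ((R2.filter (fun t => t.2 = z)).card : ℝ) ^ 3) ^ ((1 : ℝ) / 3) := by
  refine (Nat.cast_le.2 <| card_le_sum_card_filter_mul_card_filter R1 R2 (S.image Prod.snd) _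
    fun t ht => ?_).trans ?_
  · obtain ⟨y, z, h1, h2, hS⟩ := (mem_filter.1 ht).2
    exact ⟨z, mem_image_of_mem Prod.snd hS, h1, h2⟩
  have hpqr : (3 : ℝ).HolderTriple 3 (3 / 2) := ⟨by norm_num, by norm_num, by norm_num⟩
  push_cast
  refine (Real.sum_mul_le_card_rpow_mul_Lp_mul_Lq _ hpqr (by norm_num) (fun _ => by positivity)
    (fun _ => by positivity)).trans ?_
  norm_num only [rpow_ofNat, ← mul_assoc]
  gcongr <;> exact subset_univ _
end

section
/- For every natural number N ≥ 1 there exist finite relations R1, R2 ⊆ ℕ × ℕ and S ⊆ ℕ × ℕ (namely R1 = R2 = {(1,1)} and S = {(1,1),(2,1),…,(N,1)}) such that the full star join Star = {(x1,x2,y,z) : (x1,z) ∈ R1, (x2,z) ∈ R2, (y,z) ∈ S} satisfies |Star| = N, while |S|^{1/3} · (Σ_{z} |{x1 : (x1,z) ∈ R1}|³)^{1/3} · (Σ_{z} |{x2 : (x2,z) ∈ R2}|³)^{1/3} = N^{1/3}. Consequently, for N > 1 the group-by q-inequality |StarG| ≤ |S|^{1/3} · ‖deg_{R1}(X1|Z)‖_3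 · ‖deg_{R2}(X2|Z)‖_3 fails when the left-hand side is replaced by the size of the full join. -/
/-! With `R1 = R2 = {(1,1)}` every `z`-group of the star join has size `1 · 1 · deg_S(z)`, so the
join is just a copy of `S` and has `N` tuples, whereas both degree norms equal `1` and the bound
is only `|S|^{1/3} = N^{1/3} < N`. -/

open Finset

section StarJoin

variable {α β γ δ : Type*}

def starJoin (R1 : Finset (α × δ)) (R2 : Finset (β × δ)) (S : Finset (γ × δ)) :
    Set (α × β × γ × δ) :=
  {t | (t.1, t.2.2.2) ∈ R1 ∧ (t.2.1, t.2.2.2) ∈ R2 ∧ (t.2.2.1, t.2.2.2) ∈ S}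

theorem starJoin_singleton_singleton_product (a : α) (b : β) (c : δ) (Y : Finset γ) :
    starJoin {(a, c)} {(b, c)} (Y ×ˢ {c}) = (fun y => (a, b, y, c)) '' Y := by
  ext ⟨x1, x2, y, z⟩
  simp only [starJoin, Set.mem_ofPred_eq, mem_singleton, mem_product, Set.mem_image, mem_coe,
    Prod.mk.injEq]
  constructor
  · rintro ⟨⟨rfl, rfl⟩, ⟨rfl, -⟩, hy, -⟩
    exact ⟨y, hy, rfl, rfl, rfl, rfl⟩
  · rintro ⟨y, hy, rfl, rfl, rfl, rfl⟩
    exact ⟨⟨rfl, rfl⟩, ⟨rfl, rfl⟩, hy, rfl⟩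

theorem ncard_starJoin_singleton_singleton_product (a : α) (b : β) (c : δ) (Y : Finset γ) :
    (starJoin {(a, c)} {(b, c)} (Y ×ˢ {c})).ncard = #Y := by
  rw [starJoin_singleton_singleton_product,
    Set.ncard_image_of_injective _ fun y y' h => by simpa using h,
    Set.ncard_coe_finset]

end StarJoin

section DegreeNorm

variable {α δ : Type*} [DecidableEq δ]

/-- `‖deg_R(A|D)‖_p ^ p`. -/
def degPowSum (p : ℕ) (R : Finset (α × δ)) : ℝ :=
  ∑ z ∈ R.image Prod.snd, (#(R.filter fun t => t.2 = z) : ℝ) ^ p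

@[simp]
theorem degPowSum_singleton (p : ℕ) (x : α × δ) : degPowSum p {x} = 1 := by
  simp [degPowSum, filter_singleton]

end DegreeNorm

theorem star_full_join_counterexample_general (N : ℕ) :
    ∃ R1 R2 S : Finset (ℕ × ℕ),
      (({t : ℕ × ℕ × ℕ × ℕ |
          (t.1, t.2.2.2) ∈ R1 ∧ (t.2.1, t.2.2.2) ∈ R2 ∧ (t.2.2.1, t.2.2.2) ∈ S} :
            Set (ℕ × ℕ × ℕ × ℕ)).ncard = N) ∧
      ((S.card : ℝ) ^ ((1 : ℝ) / 3)
          * (∑ z ∈ R1.image Prod.snd, ((R1.filter (fun t => t.2 = z)).card : ℝ) ^ 3)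
              ^ ((1 : ℝ) / 3)
          * (∑ z ∈ R2.image Prod.snd, ((R2.filter (fun t => t.2 = z)).card : ℝ) ^ 3)
              ^ ((1 : ℝ) / 3)
        = (N : ℝ) ^ ((1 : ℝ) / 3)) ∧
      (1 < N →
        ¬ ((({t : ℕ × ℕ × ℕ × ℕ |
              (t.1, t.2.2.2) ∈ R1 ∧ (t.2.1, t.2.2.2) ∈ R2 ∧ (t.2.2.1, t.2.2.2) ∈ S} :
                Set (ℕ × ℕ × ℕ × ℕ)).ncard : ℝ)
            ≤ (S.card : ℝ) ^ ((1 : ℝ) / 3)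
              * (∑ z ∈ R1.image Prod.snd,
                  ((R1.filter (fun t => t.2 = z)).card : ℝ) ^ 3) ^ ((1 : ℝ) / 3)
              * (∑ z ∈ R2.image Prod.snd,
                  ((R2.filter (fun t => t.2 = z)).card : ℝ) ^ 3) ^ ((1 : ℝ) / 3))) := by
  set R : Finset (ℕ × ℕ) := {(1, 1)}
  set S : Finset (ℕ × ℕ) := Icc 1 N ×ˢ {1}
  have hjoin : (starJoin R R S).ncard = N := by
    rw [ncard_starJoin_singleton_singleton_product, Nat.card_Icc, Nat.add_sub_cancel]
  have hbound : (#S : ℝ) ^ ((1 : ℝ) / 3) * degPowSum 3 R ^ ((1 : ℝ) / 3)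
      * degPowSum 3 R ^ ((1 : ℝ) / 3) = (N : ℝ) ^ ((1 : ℝ) / 3) := by
    simp [R, S]
  refine ⟨R, R, S, hjoin, hbound, fun hN => ?_⟩
  change ¬ ((starJoin R R S).ncard : ℝ) ≤ _ * degPowSum 3 R ^ _ * degPowSum 3 R ^ _
  rw [hbound, hjoin, not_le]
  exact Real.rpow_lt_self_of_one_lt (by exact_mod_cast hN) (by norm_num)

/-- For every `N ≥ 1` there are finite relations `R1, R2, S ⊆ ℕ × ℕ` whose full star
join has exactly `N` tuples, while the quantity
`|S|^{1/3} · ‖deg_{R1}(X1|Z)‖_3 · ‖deg_{R2}(X2|Z)‖_3` equals `N^{1/3}`.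
Consequently, for `N > 1` the group-by q-inequality fails when its left-hand side is
replaced by the size of the full join. -/
theorem star_full_join_counterexample (N : ℕ) (hN : 1 ≤ N) :
    ∃ R1 R2 S : Finset (ℕ × ℕ),
      (({t : ℕ × ℕ × ℕ × ℕ |
          (t.1, t.2.2.2) ∈ R1 ∧ (t.2.1, t.2.2.2) ∈ R2 ∧ (t.2.2.1, t.2.2.2) ∈ S} :
            Set (ℕ × ℕ × ℕ × ℕ)).ncard = N) ∧
      ((S.card : ℝ) ^ ((1 : ℝ) / 3)
          * (∑ z ∈ R1.image Prod.snd, ((R1.filter (fun t => t.2 = z)).card : ℝ) ^ 3)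
              ^ ((1 : ℝ) / 3)
          * (∑ z ∈ R2.image Prod.snd, ((R2.filter (fun t => t.2 = z)).card : ℝ) ^ 3)
              ^ ((1 : ℝ) / 3)
        = (N : ℝ) ^ ((1 : ℝ) / 3)) ∧
      (1 < N →
        ¬ ((({t : ℕ × ℕ × ℕ × ℕ |
              (t.1, t.2.2.2) ∈ R1 ∧ (t.2.1, t.2.2.2) ∈ R2 ∧ (t.2.2.1, t.2.2.2) ∈ S} :
                Set (ℕ × ℕ × ℕ × ℕ)).ncard : ℝ)
            ≤ (S.card : ℝ) ^ ((1 : ℝ) / 3)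
              * (∑ z ∈ R1.image Prod.snd,
                  ((R1.filter (fun t => t.2 = z)).card : ℝ) ^ 3) ^ ((1 : ℝ) / 3)
              * (∑ z ∈ R2.image Prod.snd,
                  ((R2.filter (fun t => t.2 = z)).card : ℝ) ^ 3) ^ ((1 : ℝ) / 3))) :=
  star_full_join_counterexample_general N
end

section
/- Let V = {X1, …, Xn} be a finite set of n ≥ 1 elements and let a1, …, an, A be nonnegative real numbers such that a1 + ⋯ + an ≥ A and ai ≤ A for all i = 1, …, n. Then there exists a normal polymatroid h : 2^V → ℝ such that h({Xi}) = ai for all i = 1, …, n and h(V) = A. -/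
/-!
A coverage function `W ↦ μ (⋃ i ∈ W, C i)` is a normal polymatroid: by inclusion–exclusion its
alternating sum over the subsets of `U` is `μ (⋂ i ∈ U, C i) ≥ 0`. So it suffices to find
intervals of lengths `aᵢ` inside `[0, A)` whose union is `[0, A)`. Laid end to end from `0` they
cover `[0, A)` because `∑ aᵢ ≥ A`; an interval that sticks out past `A` can be moved left into
`[0, A)` because `aᵢ ≤ A`, and this keeps the covering.
-/

/-- A set function `h : 2^V → ℝ` on a finite set `V` is a *normal polymatroid* if
`h(∅) = 0` and for every `U ⊆ V`, `Σ_{W ⊆ U} (−1)^{|W|+1} h(W) ≥ 0`. -/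
def IsNormalPolymatroid {V : Type*} [DecidableEq V] (h : Finset V → ℝ) : Prop :=
  h ∅ = 0 ∧ ∀ U : Finset V, 0 ≤ ∑ W ∈ U.powerset, (-1 : ℝ) ^ (W.card + 1) * h W

open MeasureTheory Set Finset

theorem sum_powerset_neg_one_pow_mul_indicator_biUnion {ι α R : Type*} [DecidableEq ι] [Ring R]
    {U : Finset ι} (hU : U.Nonempty) (C : ι → Set α) (x : α) :
    ∑ W ∈ U.powerset, (-1 : R) ^ (#W + 1) * (⋃ i ∈ W, C i).indicator 1 x =
      (⋂ i ∈ U, C i).indicator 1 x := by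
  classical
  set T := {i ∈ U | x ∉ C i}
  have hunion : ∀ W ∈ U.powerset,
      (⋃ i ∈ W, C i).indicator (1 : α → R) x = 1 - if W ⊆ T then 1 else 0 := by
    intro W hW
    by_cases hWT : W ⊆ T
    · have : x ∉ ⋃ i ∈ W, C i := by
        simp only [mem_iUnion, not_exists]
        exact fun i hi => (mem_filter.1 (hWT hi)).2
      simp [hWT, this]
    · have : x ∈ ⋃ i ∈ W, C i := by
        simp only [mem_iUnion, exists_prop]
        by_contra! h
        exact hWT fun i hi => mem_filter.2 ⟨Finset.mem_powerset.1 hW hi, h i hi⟩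
      simp [hWT, this]
  have hinter : (⋂ i ∈ U, C i).indicator (1 : α → R) x = if T = ∅ then 1 else 0 := by
    simp [T, Set.indicator_apply, filter_eq_empty_iff]
  have hpowerset : {W ∈ U.powerset | W ⊆ T} = T.powerset := by
    ext W
    simp only [mem_filter, Finset.mem_powerset, and_iff_right_iff_imp]
    exact fun h => h.trans (filter_subset _ _)
  have hsum (S : Finset ι) : ∑ W ∈ S.powerset, (-1 : R) ^ #W = if S = ∅ then 1 else 0 := by
    exact_mod_cast congrArg (Int.cast : ℤ → R) sum_powerset_neg_one_pow_card
  calc ∑ W ∈ U.powerset, (-1 : R) ^ (#W + 1) * (⋃ i ∈ W, C i).indicator 1 x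
      = ∑ W ∈ U.powerset with W ⊆ T, (-1 : R) ^ #W - ∑ W ∈ U.powerset, (-1 : R) ^ #W := by
        rw [sum_filter, ← sum_sub_distrib]
        refine sum_congr rfl fun W hW => ?_
        rw [hunion W hW]
        split_ifs <;> simp [pow_succ]
    _ = (⋂ i ∈ U, C i).indicator 1 x := by
        rw [hpowerset, hsum, hsum, if_neg hU.ne_empty, sub_zero, hinter]

theorem measureReal_biInter_eq_sum_powerset {ι α : Type*} [DecidableEq ι] [MeasurableSpace α]
    {μ : Measure α} {C : ι → Set α} (hC : ∀ i, MeasurableSet (C i)) (hCμ : ∀ i, μ (C i) ≠ ⊤)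
    {U : Finset ι} (hU : U.Nonempty) :
    μ.real (⋂ i ∈ U, C i) =
      ∑ W ∈ U.powerset, (-1 : ℝ) ^ (#W + 1) * μ.real (⋃ i ∈ W, C i) := by
  have hmeas (W : Finset ι) : MeasurableSet (⋃ i ∈ W, C i) :=
    W.measurableSet_biUnion fun i _ => hC i
  have hint (W : Finset ι) : Integrable ((⋃ i ∈ W, C i).indicator 1) μ :=
    (integrable_indicator_iff (hmeas W)).2 (integrableOn_const (C := (1 : ℝ))
      (measure_biUnion_lt_top W.finite_toSet fun i _ => (hCμ i).lt_top).ne)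
  calc μ.real (⋂ i ∈ U, C i)
      = ∫ x, (⋂ i ∈ U, C i).indicator 1 x ∂μ :=
        (integral_indicator_one (U.measurableSet_biInter fun i _ => hC i)).symm
    _ = ∫ x, ∑ W ∈ U.powerset, (-1 : ℝ) ^ (#W + 1) * (⋃ i ∈ W, C i).indicator 1 x ∂μ := by
        simp_rw [sum_powerset_neg_one_pow_mul_indicator_biUnion hU]
    _ = ∑ W ∈ U.powerset, (-1 : ℝ) ^ (#W + 1) * μ.real (⋃ i ∈ W, C i) := by
        rw [integral_finsetSum _ fun W _ => (hint W).const_mul _]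
        simp_rw [integral_const_mul, integral_indicator_one (hmeas _)]

theorem isNormalPolymatroid_measureReal_biUnion {ι α : Type*} [DecidableEq ι] [MeasurableSpace α]
    {μ : Measure α} {C : ι → Set α} (hC : ∀ i, MeasurableSet (C i)) (hCμ : ∀ i, μ (C i) ≠ ⊤) :
    IsNormalPolymatroid fun W : Finset ι => μ.real (⋃ i ∈ W, C i) := by
  refine ⟨by simp, fun U => ?_⟩
  rcases U.eq_empty_or_nonempty with rfl | hU
  · simp
  · rw [← measureReal_biInter_eq_sum_powerset hC hCμ hU]
    exact measureReal_nonneg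

theorem Ico_inter_Iio_subset_Ico_min_sub {α : Type*} [AddCommGroup α] [LinearOrder α]
    [IsOrderedAddMonoid α] (s a A : α) :
    Ico s (s + a) ∩ Iio A ⊆ Ico (min s (A - a)) (min s (A - a) + a) := by
  rintro x ⟨⟨hsx, hxa⟩, hxA⟩
  refine ⟨(min_le_left _ _).trans hsx, ?_⟩
  rw [← min_add_add_right, sub_add_cancel]
  exact lt_min hxa hxA

theorem exists_iUnion_Ico_eq_Ico_zero {n : ℕ} (a : Fin n → ℝ) (A : ℝ) (ha0 : ∀ i, 0 ≤ a i)
    (haA : ∀ i, a i ≤ A) (hsum : A ≤ ∑ i, a i) :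
    ∃ t : Fin n → ℝ, ⋃ i, Ico (t i) (t i + a i) = Ico 0 A := by
  -- The `i`-th interval starts at `a₀ + ⋯ + aᵢ₋₁`, moved left just enough to end inside `[0, A)`.
  let b (k : ℕ) : ℝ := if hk : k < n then a ⟨k, hk⟩ else 0
  let S (k : ℕ) : ℝ := ∑ j ∈ range k, b j
  have hS_succ (i : Fin n) : S (i + 1) = S i + a i := by simp [S, b, sum_range_succ]
  refine ⟨fun i => min (S i) (A - a i), subset_antisymm (iUnion_subset fun i => ?_) ?_⟩
  · have hS : 0 ≤ S i := sum_nonneg fun j _ => dite_nonneg (fun _ => ha0 _) fun _ => le_rfl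
    refine Ico_subset_Ico (le_min hS (sub_nonneg.2 (haA i))) ?_
    rw [← min_add_add_right, sub_add_cancel]
    exact min_le_right _ _
  · intro x hx
    have hxS : x ∈ Ico (S 0) (S n) := by
      refine ⟨by simpa [S] using hx.1, hx.2.trans_le (hsum.trans_eq ?_)⟩
      simp [S, b, ← Fin.sum_univ_eq_sum_range]
    obtain ⟨k, hk, hxk⟩ := mem_iUnion₂.1 (Ico_subset_biUnion_Ico n S hxS)
    let i : Fin n := ⟨k, mem_range.1 hk⟩
    refine mem_iUnion.2 ⟨i, Ico_inter_Iio_subset_Ico_min_sub _ _ _ ⟨?_, hx.2⟩⟩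
    rwa [← hS_succ i]

/-- Given `n ≥ 1` nonnegative reals `a₁, …, aₙ` and `A` with `a₁ + ⋯ + aₙ ≥ A` and
`aᵢ ≤ A` for all `i`, there is a normal polymatroid `h` on the `n`-element set with
`h({Xᵢ}) = aᵢ` for all `i` and `h(V) = A`. -/
theorem normal_polymatroid_extension (n : ℕ) (hn : 1 ≤ n)
    (a : Fin n → ℝ) (A : ℝ)
    (ha0 : ∀ i, 0 ≤ a i) (haA : ∀ i, a i ≤ A) (hsum : A ≤ ∑ i, a i) :
    ∃ h : Finset (Fin n) → ℝ,
      IsNormalPolymatroid h ∧ (∀ i, h {i} = a i) ∧ h Finset.univ = A := by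
  obtain ⟨t, ht⟩ := exists_iUnion_Ico_eq_Ico_zero a A ha0 haA hsum
  have hA : 0 ≤ A := (ha0 ⟨0, hn⟩).trans (haA ⟨0, hn⟩)
  refine ⟨fun W => volume.real (⋃ i ∈ W, Ico (t i) (t i + a i)),
    isNormalPolymatroid_measureReal_biUnion (fun _ => measurableSet_Ico)
      (fun _ => measure_Ico_lt_top.ne), fun i => ?_, ?_⟩
  · simp [ha0 i]
  · simp [ht, Real.volume_real_Ico_of_le hA]
end

section
/- (Stitching Lemma) Let V1, V2 be finite sets of variables and Z = V1 ∩ V2. Let h1 : 2^{V1} → ℝ and h2 : 2^{V2} → ℝ be normal polymatroids that agree on subsets of Z, i.e., h1(U) = h2(U) for all U ⊆ Z; write h for their common restriction to 2^Z. Define h' : 2^{V1 ∪ V2} → ℝ by h'(U) = h1((U ∩ V1) ∪ (U ∩ Z)) − h1(U ∩ Z) + h2((U ∩ V2) ∪ (U ∩ Z)) − h2(U ∩ Z) + h(U ∩ Z) (that is, h'(U) = h1(U∩V1 | U∩Z) + h2(U∩V2 | U∩Z) + h(U∩Z), where h(B|A) = h(A∪B) − h(A)). Then h' is a normal polymatroid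 on 2^{V1 ∪ V2} that agrees with h1 on all subsets of V1 and with h2 on all subsets of V2, and moreover h'(V1 ∪ V2) = h'(V1) + h'(V2) − h'(V1 ∩ V2). -/
lemma alt_sum_inter_eq_zero {γ : Type*} [DecidableEq γ] (U A : Finset γ) (φ : Finset γ → ℝ)
    {x : γ} (hxU : x ∈ U) (hxA : x ∉ A) :
    ∑ W ∈ U.powerset, (-1 : ℝ) ^ (W.card + 1) * φ (W ∩ A) = 0 := by
  apply Finset.sum_involution
    (g := fun W _ => if x ∈ W then W.erase x else insert x W)
  case hg₁ =>
    intro W hW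
    by_cases hx : x ∈ W
    · simp only [hx, if_true]
      have hinter : W.erase x ∩ A = W ∩ A := by
        rw [Finset.erase_inter, Finset.erase_eq_of_notMem (by simp [hxA])]
      have hcard : W.card = (W.erase x).card + 1 := (Finset.card_erase_add_one hx).symm
      rw [hinter, hcard, pow_succ _ ((W.erase x).card + 1)]
      ring
    · simp only [hx, if_false]
      have hinter : insert x W ∩ A = W ∩ A := Finset.insert_inter_of_notMem hxA
      have hcard : (insert x W).card = W.card + 1 := Finset.card_insert_of_notMem hx
      rw [hinter, hcard, pow_succ _ (W.card + 1)]
      ring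
  case hg₃ =>
    intro W hW _
    by_cases hx : x ∈ W
    · simp only [hx, if_true]
      intro h
      exact (h ▸ Finset.notMem_erase x W) hx
    · simp only [hx, if_false]
      intro h
      exact hx (h ▸ Finset.mem_insert_self x W)
  case g_mem =>
    intro W hW
    by_cases hx : x ∈ W
    · simp only [hx, if_true, Finset.mem_powerset]
      exact (Finset.erase_subset x W).trans (Finset.mem_powerset.mp hW)
    · simp only [hx, if_false, Finset.mem_powerset]
      exact Finset.insert_subset hxU (Finset.mem_powerset.mp hW)
  case hg₄ =>
    intro W hW
    by_cases hx : x ∈ W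
    · simp [hx, Finset.notMem_erase, Finset.insert_erase hx]
    · simp [hx, Finset.erase_insert hx]

lemma alt_sum_inter_eq_self {γ : Type*} [DecidableEq γ] (U A : Finset γ) (φ : Finset γ → ℝ)
    (hUA : U ⊆ A) :
    ∑ W ∈ U.powerset, (-1 : ℝ) ^ (W.card + 1) * φ (W ∩ A) =
      ∑ W ∈ U.powerset, (-1 : ℝ) ^ (W.card + 1) * φ W := by
  refine Finset.sum_congr rfl fun W hW => ?_
  rw [Finset.inter_eq_left.mpr ((Finset.mem_powerset.mp hW).trans hUA)]

/-- A set function `h` is a *normal polymatroid on* a finite set of variables `V`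
if `h(∅) = 0` and for every `U ⊆ V`, `Σ_{W ⊆ U} (−1)^{|W|+1} h(W) ≥ 0`. -/
def IsNormalPolymatroidOn {γ : Type*} [DecidableEq γ] (V : Finset γ)
    (h : Finset γ → ℝ) : Prop :=
  h ∅ = 0 ∧ ∀ U ⊆ V, 0 ≤ ∑ W ∈ U.powerset, (-1 : ℝ) ^ (W.card + 1) * h W

/-- Stitching Lemma: if `h1`, `h2` are normal polymatroids on `V1`, `V2` that agree
on subsets of `Z = V1 ∩ V2`, then
`h'(U) = h1((U∩V1)∪(U∩Z)) − h1(U∩Z) + h2((U∩V2)∪(U∩Z)) − h2(U∩Z) + h1(U∩Z)`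
is a normal polymatroid on `V1 ∪ V2` agreeing with `h1` on subsets of `V1` and with
`h2` on subsets of `V2`, and `h'(V1 ∪ V2) = h'(V1) + h'(V2) − h'(V1 ∩ V2)`. -/

theorem stitching_lemma {γ : Type*} [DecidableEq γ] (V1 V2 : Finset γ)
    (h1 h2 : Finset γ → ℝ)
    (hn1 : IsNormalPolymatroidOn V1 h1) (hn2 : IsNormalPolymatroidOn V2 h2)
    (hagree : ∀ U ⊆ V1 ∩ V2, h1 U = h2 U) :
    let h' : Finset γ → ℝ := fun U =>
      (h1 ((U ∩ V1) ∪ (U ∩ (V1 ∩ V2))) - h1 (U ∩ (V1 ∩ V2)))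
        + (h2 ((U ∩ V2) ∪ (U ∩ (V1 ∩ V2))) - h2 (U ∩ (V1 ∩ V2)))
        + h1 (U ∩ (V1 ∩ V2))
    IsNormalPolymatroidOn (V1 ∪ V2) h'
      ∧ (∀ U ⊆ V1, h' U = h1 U)
      ∧ (∀ U ⊆ V2, h' U = h2 U)
      ∧ h' (V1 ∪ V2) = h' V1 + h' V2 - h' (V1 ∩ V2) := by
  obtain ⟨h1e, h1s⟩ := hn1
  obtain ⟨h2e, h2s⟩ := hn2
  intro h'
  -- simplified formula for h'
  have hsimp : ∀ U, h' U = h1 (U ∩ V1) + h2 (U ∩ V2) - h1 (U ∩ (V1 ∩ V2)) := by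
    intro U
    have e1 : (U ∩ V1) ∪ (U ∩ (V1 ∩ V2)) = U ∩ V1 :=
      Finset.union_eq_left.mpr
        (Finset.inter_subset_inter (Finset.Subset.refl U) Finset.inter_subset_left)
    have e2 : (U ∩ V2) ∪ (U ∩ (V1 ∩ V2)) = U ∩ V2 :=
      Finset.union_eq_left.mpr
        (Finset.inter_subset_inter (Finset.Subset.refl U) Finset.inter_subset_right)
    have e3 : h1 (U ∩ (V1 ∩ V2)) = h2 (U ∩ (V1 ∩ V2)) :=
      hagree _ Finset.inter_subset_right
    simp only [h']
    rw [e1, e2, e3]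
    ring
  -- agreement with h1
  have hag1 : ∀ U ⊆ V1, h' U = h1 U := by
    intro U hU
    rw [hsimp U, Finset.inter_eq_left.mpr hU]
    have e : U ∩ (V1 ∩ V2) = U ∩ V2 := by
      rw [← Finset.inter_assoc, Finset.inter_eq_left.mpr hU]
    rw [e, hagree (U ∩ V2) (by
      rw [← Finset.inter_eq_left.mpr hU, Finset.inter_assoc]
      exact Finset.inter_subset_right)]
    ring
  -- agreement with h2
  have hag2 : ∀ U ⊆ V2, h' U = h2 U := by
    intro U hU
    rw [hsimp U, Finset.inter_eq_left.mpr hU]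
    have e : U ∩ (V1 ∩ V2) = U ∩ V1 := by
      rw [Finset.inter_comm V1 V2, ← Finset.inter_assoc, Finset.inter_eq_left.mpr hU]
    rw [e]
    ring
  refine ⟨⟨?_, ?_⟩, hag1, hag2, ?_⟩
  · rw [hsimp ∅]
    simp [h1e, h2e]
  · intro U hU
    have expand : ∑ W ∈ U.powerset, (-1 : ℝ) ^ (W.card + 1) * h' W =
        (∑ W ∈ U.powerset, (-1 : ℝ) ^ (W.card + 1) * h1 (W ∩ V1))
          + (∑ W ∈ U.powerset, (-1 : ℝ) ^ (W.card + 1) * h2 (W ∩ V2))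
          - ∑ W ∈ U.powerset, (-1 : ℝ) ^ (W.card + 1) * h1 (W ∩ (V1 ∩ V2)) := by
      rw [← Finset.sum_add_distrib, ← Finset.sum_sub_distrib]
      refine Finset.sum_congr rfl fun W _ => ?_
      rw [hsimp W]; ring
    rw [expand]
    by_cases hU1 : U ⊆ V1 <;> by_cases hU2 : U ⊆ V2
    · -- U ⊆ V1 ∩ V2
      have hUZ : U ⊆ V1 ∩ V2 := Finset.subset_inter hU1 hU2
      rw [alt_sum_inter_eq_self U V1 h1 hU1, alt_sum_inter_eq_self U V2 h2 hU2,
        alt_sum_inter_eq_self U (V1 ∩ V2) h1 hUZ]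
      have := h2s U hU2
      linarith
    · obtain ⟨x, hxU, hxV2⟩ := Finset.not_subset.mp hU2
      have hxZ : x ∉ V1 ∩ V2 := fun h => hxV2 (Finset.mem_inter.mp h).2
      rw [alt_sum_inter_eq_self U V1 h1 hU1,
        alt_sum_inter_eq_zero U V2 h2 hxU hxV2,
        alt_sum_inter_eq_zero U (V1 ∩ V2) h1 hxU hxZ]
      have := h1s U hU1
      linarith
    · obtain ⟨x, hxU, hxV1⟩ := Finset.not_subset.mp hU1
      have hxZ : x ∉ V1 ∩ V2 := fun h => hxV1 (Finset.mem_inter.mp h).1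
      rw [alt_sum_inter_eq_self U V2 h2 hU2,
        alt_sum_inter_eq_zero U V1 h1 hxU hxV1,
        alt_sum_inter_eq_zero U (V1 ∩ V2) h1 hxU hxZ]
      have := h2s U hU2
      linarith
    · obtain ⟨x, hxU, hxV1⟩ := Finset.not_subset.mp hU1
      obtain ⟨y, hyU, hyV2⟩ := Finset.not_subset.mp hU2
      have hxZ : x ∉ V1 ∩ V2 := fun h => hxV1 (Finset.mem_inter.mp h).1
      rw [alt_sum_inter_eq_zero U V1 h1 hxU hxV1,
        alt_sum_inter_eq_zero U V2 h2 hyU hyV2,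
        alt_sum_inter_eq_zero U (V1 ∩ V2) h1 hxU hxZ]
      norm_num
  · rw [hsimp (V1 ∪ V2), hag1 V1 (Finset.Subset.refl V1), hag2 V2 (Finset.Subset.refl V2),
      hag1 (V1 ∩ V2) Finset.inter_subset_left,
      Finset.union_inter_cancel_left, Finset.union_inter_cancel_right,
      Finset.inter_eq_right.mpr (Finset.inter_subset_left.trans Finset.subset_union_left)]
end

section
/- Let V ⊆ V0 be finite sets and let h : 2^V → ℝ be a normal polymatroid. Define h' : 2^{V0} → ℝ by h'(U) = h(U ∩ V) for all U ⊆ V0. Then h' is a normal polymatroid on 2^{V0}. -/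
/-- If `h` is a normal polymatroid on `V ⊆ V0`, then `h'(U) = h(U ∩ V)` is a normal
polymatroid on `V0` (extending `h` by ignoring the additional variables). -/
theorem normal_polymatroid_trivial_extension {γ : Type*} [DecidableEq γ]
    (V V0 : Finset γ) (hVV0 : V ⊆ V0)
    (h : Finset γ → ℝ) (hh : IsNormalPolymatroidOn V h) :
    IsNormalPolymatroidOn V0 (fun U => h (U ∩ V)) := by
  obtain ⟨h0, hmono⟩ := hh
  constructor
  · simpa using h0
  · intro U hU
    by_cases hUV : U ⊆ V
    · refine le_of_le_of_eq (hmono U hUV) (Finset.sum_congr rfl ?_)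
      intro W hW
      rw [Finset.mem_powerset] at hW
      simp [Finset.inter_eq_left.mpr (hW.trans hUV)]
    · obtain ⟨x, hxU, hxV⟩ := Finset.not_subset.mp hUV
      have hx : x ∉ U.erase x := Finset.notMem_erase x U
      have hU' : U = insert x (U.erase x) := (Finset.insert_erase hxU).symm
      rw [hU', Finset.sum_powerset_insert hx]
      have key : ∀ t ∈ (U.erase x).powerset,
          (fun W => (-1:ℝ) ^ (W.card + 1) * h (W ∩ V)) (insert x t)
          = -((-1:ℝ) ^ (t.card + 1) * h (t ∩ V)) := by
        intro t ht
        rw [Finset.mem_powerset] at ht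
        have hxt : x ∉ t := fun hc => hx (ht hc)
        simp only [Finset.card_insert_of_notMem hxt,
          Finset.insert_inter_of_notMem hxV]
        ring
      rw [Finset.sum_congr rfl key]
      simp
end

section
/- Let V be a finite set, Z ⊆ V, and let h : 2^V → ℝ be a normal polymatroid. Define h', h'' : 2^V → ℝ by h'(U) = h(U ∩ Z) and h''(U) = h(U) − h(U ∩ Z) for all U ⊆ V (i.e., h''(U) = h(U | U ∩ Z)). Then both h' and h'' are normal polymatroids on 2^V. -/
/-!
The alternating sum `Σ_{W ⊆ U} (−1)^{|W|+1} g(W)` vanishes as soon as `g` ignores some element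
`x ∈ U`, since the terms for `W` and `W ∪ {x}` cancel. For `g(W) = h(W ∩ Z)` this happens whenever
`U ⊄ Z`, while for `U ⊆ Z` the sum is that of `h`. So the sums of `h'` are those of `h` or `0`, and
the sums of `h'' = h − h'` are `0` or those of `h`.
-/

open Finset

section

variable {α : Type*} [DecidableEq α]

lemma sum_powerset_neg_one_pow_mul_eq_zero {R : Type*} [CommRing R] (g : Finset α → R)
    {U : Finset α} {x : α} (hxU : x ∈ U) (hg : ∀ W, g (insert x W) = g W) :
    ∑ W ∈ U.powerset, (-1 : R) ^ (W.card + 1) * g W = 0 := by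
  have hx : x ∉ U.erase x := notMem_erase x U
  rw [← insert_erase hxU, sum_powerset_insert hx, ← sum_add_distrib]
  refine sum_eq_zero fun W hW => ?_
  have hxW : x ∉ W := fun h => hx (mem_powerset.mp hW h)
  rw [card_insert_of_notMem hxW, hg]
  ring

lemma sum_powerset_neg_one_pow_mul_inter (h : Finset α → ℝ) (Z U : Finset α) :
    ∑ W ∈ U.powerset, (-1 : ℝ) ^ (W.card + 1) * h (W ∩ Z) =
      if U ⊆ Z then ∑ W ∈ U.powerset, (-1 : ℝ) ^ (W.card + 1) * h W else 0 := by
  split_ifs with hUZ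
  · refine sum_congr rfl fun W hW => ?_
    rw [inter_eq_left.mpr ((mem_powerset.mp hW).trans hUZ)]
  · obtain ⟨x, hxU, hxZ⟩ := not_subset.mp hUZ
    exact sum_powerset_neg_one_pow_mul_eq_zero _ hxU fun W => by
      rw [insert_inter_of_notMem hxZ]

namespace IsNormalPolymatroid

variable {h : Finset α → ℝ}

lemma restrict (hh : IsNormalPolymatroid h) (Z : Finset α) :
    IsNormalPolymatroid (fun U => h (U ∩ Z)) := by
  refine ⟨by simpa using hh.1, fun U => ?_⟩
  rw [sum_powerset_neg_one_pow_mul_inter]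
  split_ifs
  exacts [hh.2 U, le_rfl]

lemma conditional (hh : IsNormalPolymatroid h) (Z : Finset α) :
    IsNormalPolymatroid (fun U => h U - h (U ∩ Z)) := by
  refine ⟨by simp, fun U => ?_⟩
  simp_rw [mul_sub, sum_sub_distrib, sum_powerset_neg_one_pow_mul_inter]
  split_ifs
  exacts [(sub_self _).ge, by simpa using hh.2 U]

end IsNormalPolymatroid

end

theorem normal_polymatroid_restrict_and_conditional_general {V : Type*}
    [DecidableEq V]
    (Z : Finset V) (h : Finset V → ℝ) (hh : IsNormalPolymatroid h) :
    IsNormalPolymatroid (fun U => h (U ∩ Z))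
      ∧ IsNormalPolymatroid (fun U => h U - h (U ∩ Z)) :=
  ⟨hh.restrict Z, hh.conditional Z⟩

/-- If `h` is a normal polymatroid on a finite set `V` and `Z ⊆ V`, then both
`h'(U) = h(U ∩ Z)` and `h''(U) = h(U) − h(U ∩ Z) = h(U | U ∩ Z)` are normal
polymatroids on `V`. -/
theorem normal_polymatroid_restrict_and_conditional {V : Type*}
    [Fintype V] [DecidableEq V]
    (Z : Finset V) (h : Finset V → ℝ) (hh : IsNormalPolymatroid h) :
    IsNormalPolymatroid (fun U => h (U ∩ Z))
      ∧ IsNormalPolymatroid (fun U => h U - h (U ∩ Z)) :=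
  normal_polymatroid_restrict_and_conditional_general Z h hh
end

section
/- (Lee's Lemma, part 1) Let T be a finite tree with node set N and edge set E, let V be a finite set of variables, and let χ : N → 2^V assign a bag of variables to each node such that the running intersection property holds: for every x ∈ V, the set of nodes t with x ∈ χ(t) induces a connected subtree of T. Let h : 2^V → ℝ be a polymatroid. Then Σ_{t ∈ N} h(χ(t)) − Σ_{(t1,t2) ∈ E} h(χ(t1) ∩ χ(t2)) ≥ h(⋃_{t ∈ N} χ(t)). -/
/-!
Root the tree at `r` and let `parent t` be the neighbour of `t` closer to `r`; then
`t ↦ {t, parent t}` is a bijection from the non-root nodes onto the edges. Adding the nodes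
one at a time in order of increasing distance from `r`, the bag of `parent t` is already
contained in the union `U` of the earlier bags, so submodularity and monotonicity give

    h (U ∪ χ t) ≤ h U + h (χ t) - h (U ∩ χ t) ≤ h U + h (χ t) - h (χ t ∩ χ (parent t)).

Summing these steps is the claim.
-/

open Finset

namespace SimpleGraph

variable {N : Type*} {G : SimpleGraph N} {r t a : N}

lemma Walk.dist_le_length_of_mem_support {u v x : N} (p : G.Walk u v) (hx : x ∈ p.support) :
    G.dist u x ≤ p.length := by
  classical
  exact (dist_le _).trans (p.length_takeUntil_le_length hx)

lemma Walk.dist_penultimate_lt {q : G.Walk r t} (hq : q.length = G.dist r t) (ht : t ≠ r) :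
    G.dist r q.penultimate < G.dist r t := by
  have hnil : ¬q.Nil := Walk.not_nil_of_ne ht.symm
  have := q.length_dropLast_add_one hnil
  have := dist_le q.dropLast
  omega

lemma IsAcyclic.eq_penultimate_of_adj_of_dist_lt (hG : G.IsAcyclic) {q : G.Walk r t}
    (hq : q.length = G.dist r t) (hadj : G.Adj t a) (hlt : G.dist r a < G.dist r t) :
    a = q.penultimate := by
  have hq_path := q.isPath_of_length_eq_dist hq
  obtain ⟨p, hp, hp_len⟩ := (q.reachable.trans hadj.reachable).exists_path_of_dist
  have ht : t ∉ p.support := fun ht ↦ by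
    have := p.dist_le_length_of_mem_support ht
    omega
  exact hG.eq_penultimate_of_adj_end hq_path hadj
    (hG.mem_support_of_ne_mem_support_of_adj_of_isPath hq_path hp hadj ht)

/-- The neighbour of `t` on a chosen shortest walk from `r` to `t` (and `r` itself if `t = r`). -/
noncomputable def Connected.parent (hG : G.Connected) (r t : N) : N :=
  (hG.exists_walk_length_eq_dist r t).choose.penultimate

lemma Connected.adj_parent (hG : G.Connected) (ht : t ≠ r) : G.Adj t (hG.parent r t) :=
  (Walk.adj_penultimate (Walk.not_nil_of_ne ht.symm)).symm

lemma Connected.dist_parent_lt (hG : G.Connected) (ht : t ≠ r) :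
    G.dist r (hG.parent r t) < G.dist r t :=
  Walk.dist_penultimate_lt (hG.exists_walk_length_eq_dist r t).choose_spec ht

lemma IsTree.eq_parent_of_adj_of_dist_lt (hG : G.IsTree) (hadj : G.Adj t a)
    (hlt : G.dist r a < G.dist r t) : a = hG.connected.parent r t :=
  hG.isAcyclic.eq_penultimate_of_adj_of_dist_lt
    (hG.connected.exists_walk_length_eq_dist r t).choose_spec hadj hlt

lemma IsTree.sum_edgeFinset_eq_sum_parent [Fintype N] [DecidableEq N] [DecidableRel G.Adj]
    {M : Type*} [AddCommMonoid M] (hG : G.IsTree) (r : N) (f : Sym2 N → M) :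
    ∑ e ∈ G.edgeFinset, f e = ∑ t ∈ univ.erase r, f s(t, hG.connected.parent r t) := by
  symm
  refine sum_bij (fun t _ ↦ s(t, hG.connected.parent r t)) (fun t ht ↦ ?_)
    (fun t₁ ht₁ t₂ ht₂ heq ↦ ?_) (fun e he ↦ ?_) (fun _ _ ↦ rfl)
  · exact mem_edgeFinset.2 (hG.connected.adj_parent (ne_of_mem_erase ht))
  · rcases Sym2.eq_iff.1 heq with ⟨h, -⟩ | ⟨h₁, h₂⟩
    · exact h
    · have := hG.connected.dist_parent_lt (r := r) (ne_of_mem_erase ht₁)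
      have := hG.connected.dist_parent_lt (r := r) (ne_of_mem_erase ht₂)
      grind
  · induction e with | h u v => ?_
    have hadj : G.Adj u v := mem_edgeFinset.1 he
    clear he
    wlog hlt : G.dist r u < G.dist r v generalizing u v
    · obtain ⟨t, ht, hte⟩ := this v u hadj.symm (by have := hG.dist_ne_of_adj r hadj; omega)
      exact ⟨t, ht, hte.trans Sym2.eq_swap⟩
    have hv : v ≠ r := by rintro rfl; simp at hlt
    refine ⟨v, mem_erase.2 ⟨hv, mem_univ v⟩, ?_⟩
    rw [← hG.eq_parent_of_adj_of_dist_lt hadj.symm hlt, Sym2.eq_swap]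

end SimpleGraph

section Polymatroid

variable {ι V : Type*} [DecidableEq V] {h : Finset V → ℝ}

lemma union_add_inter_le_of_subset (hmono : Monotone h)
    (hsub : ∀ U U' : Finset V, h (U ∪ U') + h (U ∩ U') ≤ h U + h U')
    {A B C : Finset V} (hCA : C ⊆ A) : h (A ∪ B) + h (B ∩ C) ≤ h A + h B := by
  have : h (B ∩ C) ≤ h (A ∩ B) :=
    hmono fun x hx ↦ mem_inter.2 ⟨hCA (mem_of_mem_inter_right hx), mem_of_mem_inter_left hx⟩
  linarith [hsub A B]

theorem sup_add_sum_inter_parent_le [DecidableEq ι] {α : Type*} [LinearOrder α]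
    (hmono : Monotone h)
    (hsub : ∀ U U' : Finset V, h (U ∪ U') + h (U ∩ U') ≤ h U + h U')
    (χ : ι → Finset V) (r : ι) (p : ι → ι) (d : ι → α) (T : Finset ι)
    (hd : ∀ t ∈ T, d (p t) < d t) (hT : ∀ t ∈ T, p t ∈ insert r T) :
    h ((insert r T).sup χ) + ∑ t ∈ T, h (χ t ∩ χ (p t)) ≤
      h (χ r) + ∑ t ∈ T, h (χ t) := by
  induction T using Finset.induction_on_max_value d with
  | empty => simp
  | insert a T haT hmax ih =>
    have hd' : ∀ t ∈ T, d (p t) < d t := fun t ht ↦ hd t (mem_insert_of_mem ht)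
    have hpa : p a ∈ insert r T := by
      have := hT a (mem_insert_self a T)
      have := hd a (mem_insert_self a T)
      grind
    have hT' : ∀ t ∈ T, p t ∈ insert r T := fun t ht ↦ by
      have := hT t (mem_insert_of_mem ht)
      have := hd' t ht
      have := hmax t ht
      grind
    have hstep := union_add_inter_le_of_subset hmono hsub (B := χ a) (le_sup (f := χ) hpa)
    rw [insert_comm, sup_insert, sup_eq_union, union_comm, sum_insert haT, sum_insert haT]
    linarith [ih hd' hT']

end Polymatroid

/-- Lee's Lemma, part 1: given a finite tree `G` on node set `N`, bags
`χ : N → Finset V` satisfying the running intersection property (for every variable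
`x`, the nodes whose bag contains `x` induce a connected subgraph), and a polymatroid
`h` (zero on `∅`, monotone, and submodular), we have
`Σ_{t ∈ N} h(χ(t)) − Σ_{(t1,t2) ∈ E} h(χ(t1) ∩ χ(t2)) ≥ h(⋃_{t ∈ N} χ(t))`. -/
theorem lee_lemma {N V : Type*} [Fintype N] [DecidableEq N] [DecidableEq V]
    (G : SimpleGraph N) [DecidableRel G.Adj] (hT : G.IsTree)
    (χ : N → Finset V)
    (h : Finset V → ℝ)
    (hmono : ∀ U U' : Finset V, U ⊆ U' → h U ≤ h U')
    (hsub : ∀ U U' : Finset V, h (U ∪ U') + h (U ∩ U') ≤ h U + h U') :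
    h (Finset.univ.sup χ)
      ≤ ∑ t, h (χ t)
        - ∑ e ∈ G.edgeFinset,
            Sym2.lift
              ⟨fun t1 t2 => h (χ t1 ∩ χ t2),
               fun t1 t2 => by simp only [Finset.inter_comm]⟩ e := by
  obtain ⟨r⟩ := hT.connected.nonempty
  have key := sup_add_sum_inter_parent_le hmono hsub χ r (hT.connected.parent r) (G.dist r)
    (univ.erase r) (fun t ht ↦ hT.connected.dist_parent_lt (ne_of_mem_erase ht)) (by simp)
  rw [insert_erase (mem_univ r)] at key
  rw [hT.sum_edgeFinset_eq_sum_parent r, ← add_sum_erase _ _ (mem_univ r)]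
  simpa only [Sym2.lift_mk, le_sub_iff_add_le] using key
end

section
/- Let h : 2^{{X,Y,Z,U}} → ℝ be a polymatroid on the four-element set {X, Y, Z, U}. Then 3·h({X,Y}) + 2·h({Y,Z}) + 3·h({Z,U}) − 2·h({Y}) − 2·h({Z}) ≥ 3·h({X,Y,Z,U}). (This is the Shannon inequality underlying the q-inequality |J3| ≤ |R|^{1/3} · ‖deg_R(X|Y)‖_2^{2/3} · ‖deg_S(Z|Y)‖_2^{2/3} · ‖deg_T(U|Z)‖_3 for the three-way join.) -/
/-!
Two applications of submodularity along the chain `{X,Y} ⊆ {X,Y,Z} ⊆ {X,Y,Z,U}` give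
`h(XYZU) + h(Y) + h(Z) ≤ h(XY) + h(YZ) + h(ZU)`, and subadditivity on the disjoint pair
`{X,Y}`, `{Z,U}` gives `h(XYZU) ≤ h(XY) + h(ZU)`. Twice the first plus the second is the claim.
-/

section Submodular

variable {α : Type*} [DecidableEq α] {h : Finset α → ℝ}

theorem submodular_union_three
    (hsub : ∀ U U' : Finset α, h (U ∪ U') + h (U ∩ U') ≤ h U + h U') (A B C : Finset α) :
    h (A ∪ B ∪ C) + h (A ∩ B) + h ((A ∪ B) ∩ C) ≤ h A + h B + h C := by
  linarith [hsub A B, hsub (A ∪ B) C]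

theorem subadditive_of_disjoint (h0 : h ∅ = 0)
    (hsub : ∀ U U' : Finset α, h (U ∪ U') + h (U ∩ U') ≤ h U + h U') {A B : Finset α}
    (hAB : Disjoint A B) : h (A ∪ B) ≤ h A + h B := by
  simpa [Finset.disjoint_iff_inter_eq_empty.mp hAB, h0] using hsub A B

end Submodular

/-- `{X, Y, Z, U}` is modeled as `Fin 4` with `X = 0`, `Y = 1`, `Z = 2`, `U = 3`. -/
theorem shannon_inequality_three_way_join_general (h : Finset (Fin 4) → ℝ)
    (h0 : h ∅ = 0)
    (hsub : ∀ U U' : Finset (Fin 4), h (U ∪ U') + h (U ∩ U') ≤ h U + h U') :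
    3 * h {0, 1} + 2 * h {1, 2} + 3 * h {2, 3} - 2 * h {1} - 2 * h {2}
      ≥ 3 * h {0, 1, 2, 3} := by
  have chain := submodular_union_three hsub {0, 1} {1, 2} {2, 3}
  have split := subadditive_of_disjoint h0 hsub (A := {0, 1}) (B := {2, 3}) (by decide)
  have hunion : ({0, 1} ∪ {1, 2} ∪ {2, 3} : Finset (Fin 4)) = {0, 1, 2, 3} := by decide
  have hY : ({0, 1} ∩ {1, 2} : Finset (Fin 4)) = {1} := by decide
  have hZ : (({0, 1} ∪ {1, 2}) ∩ {2, 3} : Finset (Fin 4)) = {2} := by decide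
  have hsplit : ({0, 1} ∪ {2, 3} : Finset (Fin 4)) = {0, 1, 2, 3} := by decide
  rw [hunion, hY, hZ] at chain
  rw [hsplit] at split
  linarith

/-- The Shannon inequality
`3·h({X,Y}) + 2·h({Y,Z}) + 3·h({Z,U}) − 2·h({Y}) − 2·h({Z}) ≥ 3·h({X,Y,Z,U})`
for any polymatroid `h` on the four-element set `{X, Y, Z, U}` (modeled as `Fin 4`
with `X = 0`, `Y = 1`, `Z = 2`, `U = 3`). -/
theorem shannon_inequality_three_way_join (h : Finset (Fin 4) → ℝ)
    (h0 : h ∅ = 0)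
    (hmono : ∀ U U' : Finset (Fin 4), U ⊆ U' → h U ≤ h U')
    (hsub : ∀ U U' : Finset (Fin 4), h (U ∪ U') + h (U ∩ U') ≤ h U + h U') :
    3 * h {0, 1} + 2 * h {1, 2} + 3 * h {2, 3} - 2 * h {1} - 2 * h {2}
      ≥ 3 * h {0, 1, 2, 3} :=
  shannon_inequality_three_way_join_general h h0 hsub
end

section
/- Let R ⊆ α × β and S ⊆ β × γ be finite relations. Let (a_1 ≥ a_2 ≥ ⋯) be the degrees deg'_{R,β}(y) = |{x : (x,y) ∈ R}| listed in decreasing order (extended by zeros), and let (b_1 ≥ b_2 ≥ ⋯) be the degrees deg_{S,β}(y) = |{z : (y,z) ∈ S}| listed in decreasing order (extended by zeros). Then the two-way join satisfies |{(x,y,z) : (x,y) ∈ R, (y,z) ∈ S}| ≤ Σ_i a_i · b_i. (The size of the join is Σ_y deg'_{R,β}(y) · deg_{S,β}(y), which by the rearrangement inequality is at most the sum of the products of the sorted degree sequences.) -/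
/-!
Counting the join over its middle coordinate gives `Σ_y deg'_R(y) · deg_S(y)`. A function on a
finite type has the same multiset of values as its decreasing rearrangement, so it is that
rearrangement composed with a bijection; the join size is therefore `Σ_k a_k · b_{π k}` for some
permutation `π`, and the rearrangement inequality for the two antitone sequences `a`, `b` bounds it
by `Σ_k a_k · b_k`.
-/

open Finset

theorem Fintype.exists_equiv_comp_eq_of_map_univ_eq {ι κ α : Type*} [Fintype ι] [Fintype κ]
    [DecidableEq α] {f : ι → α} {g : κ → α} (h : univ.val.map f = univ.val.map g) :
    ∃ e : ι ≃ κ, g ∘ e = f := by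
  have hfiber : ∀ a, Fintype.card {i // f i = a} = Fintype.card {j // g j = a} := fun a => by
    simpa [Fintype.card_subtype, Multiset.count_map, eq_comm, Finset.card_def] using
      congrArg (Multiset.count a) h
  refine ⟨(Equiv.sigmaFiberEquiv f).symm.trans <|
    (Equiv.sigmaCongrRight fun a => Fintype.equivOfCardEq (hfiber a)).trans
      (Equiv.sigmaFiberEquiv g), funext fun i => ?_⟩
  exact (Fintype.equivOfCardEq (hfiber (f i)) ⟨i, rfl⟩).2

theorem List.map_univ_getD_eq_coe {α : Type*} {l : List α} {n : ℕ} (hn : l.length = n) (d : α) :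
    univ.val.map (fun k : Fin n => l.getD k d) = l := by
  subst hn
  rw [Fin.univ_val_map]
  congr 1
  exact List.ext_getElem (by simp) fun k _ _ => by simp

theorem List.SortedGE.antitone_getD {α : Type*} [Preorder α] {l : List α} (hl : l.SortedGE)
    {n : ℕ} (hn : l.length = n) (d : α) : Antitone fun k : Fin n => l.getD k d := by
  subst hn
  intro i j hij
  simpa [List.getD_eq_getElem] using hl.antitone_get hij

section Rearrangement

variable {ι α : Type*} [Fintype ι] [Semiring α] [LinearOrder α] [IsStrictOrderedRing α]
  [ExistsAddOfLE α]

theorem sum_mul_le_sum_mul_of_antitone_of_map_univ_eq {n : ℕ} {f g : ι → α} {F G : Fin n → α}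
    (hF : Antitone F) (hG : Antitone G) (hf : univ.val.map f = univ.val.map F)
    (hg : univ.val.map g = univ.val.map G) :
    ∑ i, f i * g i ≤ ∑ k, F k * G k := by
  classical
  obtain ⟨e, rfl⟩ := Fintype.exists_equiv_comp_eq_of_map_univ_eq hf
  obtain ⟨e', rfl⟩ := Fintype.exists_equiv_comp_eq_of_map_univ_eq hg
  calc ∑ i, F (e i) * G (e' i) = ∑ k, F k * G ((e.symm.trans e') k) := by
        rw [← e.sum_comp]; simp
    _ ≤ ∑ k, F k * G k := (hF.monovary hG).sum_mul_comp_perm_le_sum_mul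

theorem sum_mul_le_sum_range_getD_sort (f g : ι → α) :
    ∑ i, f i * g i ≤ ∑ k ∈ range (Fintype.card ι),
      (Multiset.sort (univ.val.map f) (· ≥ ·)).getD k 0 *
        (Multiset.sort (univ.val.map g) (· ≥ ·)).getD k 0 := by
  set A := Multiset.sort (univ.val.map f) (· ≥ ·)
  set B := Multiset.sort (univ.val.map g) (· ≥ ·)
  have hA : A.length = Fintype.card ι := by simp [A]
  have hB : B.length = Fintype.card ι := by simp [B]
  rw [sum_range fun k => A.getD k 0 * B.getD k 0]
  exact sum_mul_le_sum_mul_of_antitone_of_map_univ_eq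
    ((Multiset.pairwise_sort _ _).sortedGE.antitone_getD hA 0)
    ((Multiset.pairwise_sort _ _).sortedGE.antitone_getD hB 0)
    (by rw [List.map_univ_getD_eq_coe hA, Multiset.sort_eq])
    (by rw [List.map_univ_getD_eq_coe hB, Multiset.sort_eq])

end Rearrangement

theorem card_join_eq_sum_mul {α β γ : Type*} [Fintype α] [Fintype β] [Fintype γ]
    [DecidableEq α] [DecidableEq β] [DecidableEq γ]
    (R : Finset (α × β)) (S : Finset (β × γ)) :
    (univ.filter fun t : α × β × γ => (t.1, t.2.1) ∈ R ∧ (t.2.1, t.2.2) ∈ S).card =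
      ∑ y, (R.filter (·.2 = y)).card * (S.filter (·.1 = y)).card := by
  rw [card_eq_sum_card_fiberwise (f := fun t : α × β × γ => t.2.1) fun _ _ => mem_univ _]
  refine sum_congr rfl fun y _ => ?_
  rw [← card_product]
  refine card_nbij' (fun t => ((t.1, t.2.1), (t.2.1, t.2.2))) (fun p => (p.1.1, y, p.2.2))
    ?_ ?_ ?_ ?_
  · rintro ⟨x, y', z⟩
    simp only [coe_filter, coe_product, Set.mem_ofPred_eq, Set.mem_prod, mem_filter, mem_univ,
      true_and]
    rintro ⟨⟨hR, hS⟩, rfl⟩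
    exact ⟨⟨hR, rfl⟩, hS, rfl⟩
  · rintro ⟨⟨x, y₁⟩, y₂, z⟩
    simp only [coe_filter, coe_product, Set.mem_ofPred_eq, Set.mem_prod, mem_filter, mem_univ,
      true_and]
    rintro ⟨⟨hR, rfl⟩, hS, rfl⟩
    exact ⟨⟨hR, hS⟩, trivial⟩
  · rintro ⟨x, y', z⟩
    simp only [coe_filter, Set.mem_ofPred_eq]
    rintro ⟨-, rfl⟩
    rfl
  · rintro ⟨⟨x, y₁⟩, y₂, z⟩
    simp only [coe_product, coe_filter, Set.mem_prod, Set.mem_ofPred_eq]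
    rintro ⟨⟨-, rfl⟩, -, rfl⟩
    rfl

/-- The two-way join is bounded by the dot product of the sorted (decreasing) degree
sequences: `|R ⋈ S| ≤ Σ_i a_i · b_i`, where `(a_i)` lists the degrees
`deg'_{R,β}(y) = |{x : (x,y) ∈ R}|` in decreasing order and `(b_i)` lists the degrees
`deg_{S,β}(y) = |{z : (y,z) ∈ S}|` in decreasing order (both extended by zeros). -/
theorem two_way_join_sorted_degree_bound {α β γ : Type*}
    [Fintype α] [Fintype β] [Fintype γ]
    [DecidableEq α] [DecidableEq β] [DecidableEq γ]
    (R : Finset (α × β)) (S : Finset (β × γ)) :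
    let A : List ℕ :=
      Multiset.sort
        (Finset.univ.val.map fun y : β => (R.filter (fun t => t.2 = y)).card) (· ≥ ·)
    let B : List ℕ :=
      Multiset.sort
        (Finset.univ.val.map fun y : β => (S.filter (fun t => t.1 = y)).card) (· ≥ ·)
    (Finset.univ.filter
        (fun t : α × β × γ => (t.1, t.2.1) ∈ R ∧ (t.2.1, t.2.2) ∈ S)).card
      ≤ ∑ i ∈ Finset.range (Fintype.card β), A.getD i 0 * B.getD i 0 := by
  intro A B
  rw [card_join_eq_sum_mul]
  exact sum_mul_le_sum_range_getD_sort _ _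
end
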